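/- arXiv:1201.0544 — 8 statements merged into one kernel-verified Lean document; each statement's English description precedes it below -/
import Mathlib

section
/- Let K and L be convex bodies in ℝⁿ containing the origin in their interiors, with radial functions ρ_K and ρ_L. If for every ξ on the unit sphere the unordered pairs {ρ_K(ξ), ρ_K(−ξ)} and {ρ_L(ξ), ρ_L(−ξ)} coincide, then K \ L = −(L \ K). -/
open Set

/-- The radial function of a body `K` (containing the origin in its interior):
`ρ_K(ξ) = sup {r > 0 : r • ξ ∈ K}`. -/
noncomputable def radial {n : ℕ} (K : Set (EuclideanSpace ℝ (Fin n)))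
    (ξ : EuclideanSpace ℝ (Fin n)) : ℝ :=
  sSup {r : ℝ | 0 < r ∧ r • ξ ∈ K}

lemma mem_iff_le_radial {n : ℕ} (K : Set (EuclideanSpace ℝ (Fin n)))
    (hKc : IsCompact K) (hKv : Convex ℝ K)
    (hK0 : (0 : EuclideanSpace ℝ (Fin n)) ∈ interior K)
    {ξ : EuclideanSpace ℝ (Fin n)} (hξ : ‖ξ‖ = 1) {r : ℝ} (hr : 0 < r) :
    r • ξ ∈ K ↔ r ≤ radial K ξ := by
  set S := {r : ℝ | 0 < r ∧ r • ξ ∈ K} with hS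
  have h0K : (0 : EuclideanSpace ℝ (Fin n)) ∈ K := interior_subset hK0
  obtain ⟨ε, hε, hball⟩ := Metric.mem_nhds_iff.mp (mem_interior_iff_mem_nhds.mp hK0)
  have hne : S.Nonempty := by
    refine ⟨ε/2, by positivity, hball ?_⟩
    simp only [Metric.mem_ball, dist_zero_right, norm_smul, hξ, mul_one, Real.norm_eq_abs,
      abs_of_pos (by positivity : (0:ℝ) < ε/2)]
    linarith
  obtain ⟨R, hR⟩ := hKc.isBounded.exists_norm_le
  have hbdd : BddAbove S := by
    refine ⟨R, fun s hs => ?_⟩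
    have := hR _ hs.2
    rwa [norm_smul, hξ, mul_one, Real.norm_eq_abs, abs_of_pos hs.1] at this
  -- downward closed on positives
  have hdc : ∀ s ∈ S, ∀ t, 0 < t → t ≤ s → t • ξ ∈ K := by
    intro s hs t ht hts
    have : (t/s) • (s • ξ) ∈ K := by
      apply hKv.smul_mem_of_zero_mem h0K hs.2
      exact ⟨(div_pos ht hs.1).le, div_le_one_of_le₀ hts hs.1.le⟩
    rwa [smul_smul, div_mul_cancel₀ _ (ne_of_gt hs.1)] at this
  constructor
  · intro hx
    exact le_csSup hbdd ⟨hr, hx⟩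
  · intro hle
    rcases lt_or_eq_of_le hle with hlt | heq
    · obtain ⟨s, hsS, hrs⟩ := exists_lt_of_lt_csSup hne hlt
      exact hdc s hsS r hr hrs.le
    · -- r = sSup S, use closedness
      have hseq : ∀ k : ℕ, (r - r/(k+2)) • ξ ∈ K := by
        intro k
        have h1 : r / (k+2) < r := by
          rw [div_lt_iff₀ (by positivity)]
          nlinarith [Nat.cast_nonneg (α := ℝ) k]
        have h2 : 0 < r - r/(k+2) := by linarith
        have heq' : r = sSup S := heq
        have hp : 0 < r/(k+2) := by positivity
        have h3 : r - r/(k+2) < sSup S := by rw [← heq']; linarith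
        obtain ⟨s, hsS, hrs⟩ := exists_lt_of_lt_csSup hne h3
        exact hdc s hsS _ h2 hrs.le
      have htend : Filter.Tendsto (fun k : ℕ => (r - r/(k+2)) • ξ) Filter.atTop (nhds (r • ξ)) := by
        have h1 : Filter.Tendsto (fun k : ℕ => ((k:ℝ)+2)) Filter.atTop Filter.atTop :=
          Filter.tendsto_atTop_add_const_right _ _ tendsto_natCast_atTop_atTop
        have h2 : Filter.Tendsto (fun k : ℕ => r/((k:ℝ)+2)) Filter.atTop (nhds 0) :=
          Filter.Tendsto.div_atTop tendsto_const_nhds h1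
        have h3 : Filter.Tendsto (fun k : ℕ => r - r/((k:ℝ)+2)) Filter.atTop (nhds r) := by
          simpa using tendsto_const_nhds.sub h2
        simpa using h3.smul_const ξ
      exact hKc.isClosed.mem_of_tendsto htend (Filter.Eventually.of_forall hseq)

lemma diff_subset_neg_diff {n : ℕ} (K L : Set (EuclideanSpace ℝ (Fin n)))
    (hKc : IsCompact K) (hKv : Convex ℝ K)
    (hK0 : (0 : EuclideanSpace ℝ (Fin n)) ∈ interior K)
    (hLc : IsCompact L) (hLv : Convex ℝ L)
    (hL0 : (0 : EuclideanSpace ℝ (Fin n)) ∈ interior L)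
    (h : ∀ ξ : EuclideanSpace ℝ (Fin n), ‖ξ‖ = 1 →
      ({radial K ξ, radial K (-ξ)} : Set ℝ) = {radial L ξ, radial L (-ξ)}) :
    K \ L ⊆ -(L \ K) := by
  intro x hx
  obtain ⟨hxK, hxL⟩ := hx
  have hx0 : x ≠ 0 := fun hx0 => hxL (hx0 ▸ interior_subset hL0)
  set r : ℝ := ‖x‖ with hrdef
  have hr : 0 < r := norm_pos_iff.mpr hx0
  set ξ : EuclideanSpace ℝ (Fin n) := r⁻¹ • x with hξdef
  have hξ : ‖ξ‖ = 1 := by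
    rw [hξdef, norm_smul, Real.norm_eq_abs, abs_of_pos (inv_pos.mpr hr), inv_mul_cancel₀ hr.ne']
  have hxr : r • ξ = x := by rw [hξdef, smul_smul, mul_inv_cancel₀ hr.ne', one_smul]
  have hnξ : ‖-ξ‖ = 1 := by rwa [norm_neg]
  have h1 : r ≤ radial K ξ := (mem_iff_le_radial K hKc hKv hK0 hξ hr).mp (hxr ▸ hxK)
  have h2 : ¬ r ≤ radial L ξ := fun hc => hxL (hxr ▸ (mem_iff_le_radial L hLc hLv hL0 hξ hr).mpr hc)
  have h2' : radial L ξ < r := not_le.mp h2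
  have hne : radial K ξ ≠ radial L ξ := fun hc => h2 (hc ▸ h1)
  have pair := h ξ hξ
  have e1 : radial K ξ = radial L (-ξ) := by
    have : radial K ξ ∈ ({radial L ξ, radial L (-ξ)} : Set ℝ) := pair ▸ mem_insert _ _
    rcases this with h' | h'
    · exact absurd h' hne
    · exact h'
  have e2 : radial L ξ = radial K (-ξ) := by
    have : radial L ξ ∈ ({radial K ξ, radial K (-ξ)} : Set ℝ) := pair ▸ mem_insert _ _
    rcases this with h' | h'
    · exact absurd h'.symm hne
    · exact h'
  rw [Set.mem_neg]
  have hnx : -x = r • (-ξ) := by rw [smul_neg, hxr]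
  constructor
  · rw [hnx]
    exact (mem_iff_le_radial L hLc hLv hL0 hnξ hr).mpr (e1 ▸ h1)
  · rw [hnx]
    intro hc
    have := (mem_iff_le_radial K hKc hKv hK0 hnξ hr).mp hc
    rw [← e2] at this
    exact h2 this

theorem radial_pairs_eq_imp_diff_symm {n : ℕ} (K L : Set (EuclideanSpace ℝ (Fin n)))
    (hKc : IsCompact K) (hKv : Convex ℝ K)
    (hK0 : (0 : EuclideanSpace ℝ (Fin n)) ∈ interior K)
    (hLc : IsCompact L) (hLv : Convex ℝ L)
    (hL0 : (0 : EuclideanSpace ℝ (Fin n)) ∈ interior L)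
    (h : ∀ ξ : EuclideanSpace ℝ (Fin n), ‖ξ‖ = 1 →
      ({radial K ξ, radial K (-ξ)} : Set ℝ) = {radial L ξ, radial L (-ξ)}) :
    K \ L = -(L \ K) := by
  apply subset_antisymm
  · exact diff_subset_neg_diff K L hKc hKv hK0 hLc hLv hL0 h
  · intro x hx
    rw [Set.mem_neg] at hx
    have := diff_subset_neg_diff L K hLc hLv hL0 hKc hKv hK0 (fun ξ hξ => (h ξ hξ).symm) hx
    rwa [Set.mem_neg, neg_neg] at this
end

section
/- Let K and L be convex bodies in ℝⁿ containing the origin in their interiors. If K \ L = −(L \ K), then for every unit vector ξ the unordered pairs {ρ_K(ξ), ρ_K(−ξ)} and {ρ_L(ξ), ρ_L(−ξ)} of values of the radial functions coincide. -/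
open Set

lemma radial_spec {n : ℕ} (K : Set (EuclideanSpace ℝ (Fin n)))
    (hKc : IsCompact K) (hKv : Convex ℝ K)
    (hK0 : (0 : EuclideanSpace ℝ (Fin n)) ∈ interior K)
    (ξ : EuclideanSpace ℝ (Fin n)) (hξ : ‖ξ‖ = 1) :
    0 < radial K ξ ∧ ∀ r : ℝ, 0 < r → (r • ξ ∈ K ↔ r ≤ radial K ξ) := by
  set S : Set ℝ := {r : ℝ | 0 < r ∧ r • ξ ∈ K} with hS
  obtain ⟨ε, hε, hball⟩ := Metric.mem_nhds_iff.1 (mem_interior_iff_mem_nhds.1 hK0)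
  have hK0' : (0 : EuclideanSpace ℝ (Fin n)) ∈ K := interior_subset hK0
  have hmem : ε / 2 ∈ S := by
    refine ⟨by positivity, hball ?_⟩
    rw [Metric.mem_ball, dist_zero_right, norm_smul, hξ, mul_one, Real.norm_eq_abs,
      abs_of_pos (by positivity)]
    linarith
  have hne : S.Nonempty := ⟨ε / 2, hmem⟩
  obtain ⟨R, hR⟩ := hKc.isBounded.subset_closedBall 0
  have hbdd : BddAbove S := by
    refine ⟨R, fun r hr => ?_⟩
    have := hR hr.2
    rw [Metric.mem_closedBall, dist_zero_right, norm_smul, hξ, mul_one,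
      Real.norm_eq_abs, abs_of_pos hr.1] at this
    exact this
  have hdc : ∀ s ∈ S, ∀ r : ℝ, 0 < r → r ≤ s → r ∈ S := by
    intro s hs r hr hrs
    refine ⟨hr, ?_⟩
    have h1 : r • ξ = (r / s) • (s • ξ) := by
      rw [smul_smul, div_mul_cancel₀ _ (ne_of_gt hs.1)]
    rw [h1]
    exact hKv.smul_mem_of_zero_mem hK0' hs.2
      ⟨div_nonneg hr.le hs.1.le, by rw [div_le_one hs.1]; exact hrs⟩
  have hrad : radial K ξ = sSup S := rfl
  have hpos : 0 < radial K ξ := lt_of_lt_of_le (by positivity) (le_csSup hbdd hmem)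
  have hsupmem : radial K ξ • ξ ∈ K := by
    have hcl : radial K ξ • ξ ∈ closure K := by
      rw [Metric.mem_closure_iff]
      intro δ hδ
      have hlt : radial K ξ - min δ (radial K ξ) < sSup S := by
        rw [← hrad]
        have : 0 < min δ (radial K ξ) := lt_min hδ hpos
        linarith
      obtain ⟨s, hsS, hs⟩ := exists_lt_of_lt_csSup hne hlt
      refine ⟨s • ξ, hsS.2, ?_⟩
      have hsle : s ≤ radial K ξ := le_csSup hbdd hsS
      rw [dist_eq_norm, ← sub_smul, norm_smul, hξ, mul_one, Real.norm_eq_abs,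
        abs_of_nonneg (by linarith)]
      have : min δ (radial K ξ) ≤ δ := min_le_left _ _
      linarith
    rwa [hKc.isClosed.closure_eq] at hcl
  refine ⟨hpos, fun r hr => ⟨fun hrK => le_csSup hbdd ⟨hr, hrK⟩, fun hle => ?_⟩⟩
  exact (hdc (radial K ξ) ⟨hpos, hsupmem⟩ r hr hle).2

theorem diff_symm_imp_radial_pairs_eq {n : ℕ} (K L : Set (EuclideanSpace ℝ (Fin n)))
    (hKc : IsCompact K) (hKv : Convex ℝ K)
    (hK0 : (0 : EuclideanSpace ℝ (Fin n)) ∈ interior K)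
    (hLc : IsCompact L) (hLv : Convex ℝ L)
    (hL0 : (0 : EuclideanSpace ℝ (Fin n)) ∈ interior L)
    (h : K \ L = -(L \ K)) :
    ∀ ξ : EuclideanSpace ℝ (Fin n), ‖ξ‖ = 1 →
      ({radial K ξ, radial K (-ξ)} : Set ℝ) = {radial L ξ, radial L (-ξ)} := by
  intro ξ hξ
  have hξ' : ‖-ξ‖ = 1 := by rw [norm_neg]; exact hξ
  obtain ⟨ha, hKa⟩ := radial_spec K hKc hKv hK0 ξ hξ
  obtain ⟨ha', hKa'⟩ := radial_spec K hKc hKv hK0 (-ξ) hξ'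
  obtain ⟨hb, hLb⟩ := radial_spec L hLc hLv hL0 ξ hξ
  obtain ⟨hb', hLb'⟩ := radial_spec L hLc hLv hL0 (-ξ) hξ'
  set a := radial K ξ
  set a' := radial K (-ξ)
  set b := radial L ξ
  set b' := radial L (-ξ)
  have h' : L \ K = -(K \ L) := by rw [h, neg_neg]
  have E1 : ∀ r : ℝ, 0 < r → ((r ≤ a ∧ ¬ r ≤ b) ↔ (r ≤ b' ∧ ¬ r ≤ a')) := by
    intro r hr
    have hmem : r • ξ ∈ K \ L ↔ r • (-ξ) ∈ L \ K := by
      rw [h, Set.mem_neg, smul_neg]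
    rw [Set.mem_diff, Set.mem_diff, hKa r hr, hLb r hr, hLb' r hr, hKa' r hr] at hmem
    exact hmem
  have E2 : ∀ r : ℝ, 0 < r → ((r ≤ b ∧ ¬ r ≤ a) ↔ (r ≤ a' ∧ ¬ r ≤ b')) := by
    intro r hr
    have hmem : r • ξ ∈ L \ K ↔ r • (-ξ) ∈ K \ L := by
      rw [h', Set.mem_neg, smul_neg]
    rw [Set.mem_diff, Set.mem_diff, hLb r hr, hKa r hr, hKa' r hr, hLb' r hr] at hmem
    exact hmem
  rcases lt_trichotomy a b with hab | hab | hab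
  · -- a < b : a' = b and b' = a
    have h1 : b ≤ a' ∧ ¬ b ≤ b' := (E2 b hb).1 ⟨le_rfl, not_le.2 hab⟩
    have hb'b : b' < b := not_le.1 h1.2
    have h2 : a' ≤ b ∧ ¬ a' ≤ a :=
      (E2 a' ha').2 ⟨le_rfl, not_le.2 (lt_of_lt_of_le hb'b h1.1)⟩
    have ha'b : a' = b := le_antisymm h2.1 h1.1
    have hb'a : b' = a := by
      have hle : a ≤ b' := by
        by_contra hc
        push_neg at hc
        have := (E2 a ha).2 ⟨le_of_lt (ha'b ▸ hab), not_le.2 hc⟩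
        exact this.2 le_rfl
      have hge : b' ≤ a := by
        by_contra hc
        push_neg at hc
        have := (E2 b' hb').1 ⟨hb'b.le, not_le.2 hc⟩
        exact this.2 le_rfl
      exact le_antisymm hge hle
    rw [ha'b, hb'a, Set.pair_comm]
  · -- a = b : a' = b'
    have h1 : a' ≤ b' := by
      by_contra hc
      push_neg at hc
      have := (E2 a' ha').2 ⟨le_rfl, not_le.2 hc⟩
      exact this.2 (hab ▸ this.1)
    have h2 : b' ≤ a' := by
      by_contra hc
      push_neg at hc
      have := (E1 b' hb').2 ⟨le_rfl, not_le.2 hc⟩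
      exact this.2 (hab ▸ this.1)
    rw [hab, le_antisymm h1 h2]
  · -- b < a : b' = a and a' = b
    have h1 : a ≤ b' ∧ ¬ a ≤ a' := (E1 a ha).1 ⟨le_rfl, not_le.2 hab⟩
    have ha'a : a' < a := not_le.1 h1.2
    have h2 : b' ≤ a ∧ ¬ b' ≤ b :=
      (E1 b' hb').2 ⟨le_rfl, not_le.2 (lt_of_lt_of_le ha'a h1.1)⟩
    have hb'a : b' = a := le_antisymm h2.1 h1.1
    have ha'b : a' = b := by
      have hle : b ≤ a' := by
        by_contra hc
        push_neg at hc
        have := (E1 b hb).2 ⟨le_of_lt (hb'a ▸ hab), not_le.2 hc⟩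
        exact this.2 le_rfl
      have hge : a' ≤ b := by
        by_contra hc
        push_neg at hc
        have := (E1 a' ha').1 ⟨ha'a.le, not_le.2 hc⟩
        exact this.2 le_rfl
      exact le_antisymm hge hle
    rw [ha'b, hb'a, Set.pair_comm a b]
end

section
/- Let K and L be convex bodies in ℝⁿ containing the origin in their interiors, with support functions h_K and h_L. If K \ L = −(L \ K), then for every unit vector ξ the unordered pairs {h_K(ξ), h_K(−ξ)} and {h_L(ξ), h_L(−ξ)} coincide. -/
/-!
The hypothesis says that `z ↦ -z` swaps `K \ L` and `L \ K`. In particular `L ⊆ K ∪ -K`, so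
`h_L(ξ) ≤ max (h_K ξ) (h_K (-ξ))`, and symmetrically; this gives equality of the maxima.

For the minima, suppose `s := min (h_K ξ) (h_K (-ξ)) > h_L(-ξ) ≥ 0` and let `P` be the hyperplane
`⟨ξ, ·⟩ = s`. Then `L` misses `-P`, so on the convex set `L ∩ P` the hypothesis forces
`z ∈ K ↔ -z ∉ K`: the closed sets `K` and `-K` split `L ∩ P` into two disjoint pieces. Since the
convex body `K` crosses both `P` and `-P`, both pieces are nonempty, contradicting connectedness.
-/

open Set

/-- The support function of `K`: `h_K(x) = sup {⟨x, y⟩ : y ∈ K}`. -/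
noncomputable def supp {n : ℕ} (K : Set (EuclideanSpace ℝ (Fin n)))
    (x : EuclideanSpace ℝ (Fin n)) : ℝ :=
  sSup ((fun y => (inner ℝ x y : ℝ)) '' K)

lemma pair_eq_min_max {α : Type*} [LinearOrder α] (a b : α) :
    ({a, b} : Set α) = {min a b, max a b} := by
  rcases le_total a b with hab | hab
  · simp [hab]
  · simp [hab, pair_comm]

lemma pair_eq_pair_of_min_eq_of_max_eq {α : Type*} [LinearOrder α] {a a' b b' : α}
    (hmin : min a a' = min b b') (hmax : max a a' = max b b') :
    ({a, a'} : Set α) = {b, b'} := by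
  rw [pair_eq_min_max, pair_eq_min_max b, hmin, hmax]

section SymmetricDifference

variable {α : Type*} [InvolutiveNeg α] {K L : Set α}

lemma diff_eq_neg_diff_comm (h : K \ L = -(L \ K)) : L \ K = -(K \ L) := by
  rw [h, neg_neg]

lemma subset_union_neg_of_diff_eq_neg_diff (h : K \ L = -(L \ K)) : L ⊆ K ∪ -K := by
  intro z hzL
  by_contra hz
  have hzK : z ∉ K := fun hzK => hz (Or.inl hzK)
  have hz' : z ∈ -(K \ L) := diff_eq_neg_diff_comm h ▸ ⟨hzL, hzK⟩
  exact hz (Or.inr (mem_neg.1 hz').1)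

lemma mem_of_mem_of_neg_mem (h : K \ L = -(L \ K)) {z : α} (hz : z ∈ K) (hnz : -z ∈ K) :
    z ∈ L := by
  by_contra hzL
  have : z ∈ -(L \ K) := h ▸ ⟨hz, hzL⟩
  exact (mem_neg.1 this).2 hnz

lemma disjoint_neg_of_inter_nonempty [TopologicalSpace α] [ContinuousNeg α] {P : Set α}
    (hK : IsClosed K) (h : K \ L = -(L \ K)) (hLP : Disjoint L (-P))
    (hP : IsPreconnected (L ∩ P)) (hKP : (K ∩ P).Nonempty) : Disjoint K (-P) := by
  rw [disjoint_left]
  intro y hyK hyP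
  obtain ⟨x, hxK, hxP⟩ := hKP
  have hxL : x ∈ L := by
    rcases subset_union_neg_of_diff_eq_neg_diff (diff_eq_neg_diff_comm h) hxK with hxL | hxL
    · exact hxL
    · exact absurd (mem_neg.2 (by rwa [neg_neg])) (disjoint_left.1 hLP hxL)
  have hyL : -y ∈ L \ K := mem_neg.1 (h ▸ ⟨hyK, disjoint_right.1 hLP hyP⟩)
  have hcover : L ∩ P ⊆ K ∪ -K := inter_subset_left.trans (subset_union_neg_of_diff_eq_neg_diff h)
  obtain ⟨z, ⟨hzL, hzP⟩, hzK, hnzK⟩ := isPreconnected_closed_iff.1 hP K (-K) hK hK.neg hcover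
    ⟨x, ⟨hxL, hxP⟩, hxK⟩ ⟨-y, ⟨hyL.1, mem_neg.1 hyP⟩, by rwa [mem_neg, neg_neg]⟩
  have hnzL : -z ∈ L := mem_of_mem_of_neg_mem h hnzK (by rwa [neg_neg])
  exact disjoint_left.1 hLP hnzL (by rwa [mem_neg, neg_neg])

end SymmetricDifference

section SupportFunction

variable {n : ℕ} {K L : Set (EuclideanSpace ℝ (Fin n))}

lemma inner_le_supp (hKc : IsCompact K) {x : EuclideanSpace ℝ (Fin n)} (hx : x ∈ K)
    (ξ : EuclideanSpace ℝ (Fin n)) : inner ℝ ξ x ≤ supp K ξ :=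
  le_csSup (hKc.image (continuous_const.inner continuous_id)).bddAbove ⟨x, hx, rfl⟩

lemma supp_nonneg (hKc : IsCompact K) (hK0 : 0 ∈ K) (ξ : EuclideanSpace ℝ (Fin n)) :
    0 ≤ supp K ξ := by
  simpa using inner_le_supp hKc hK0 ξ

lemma exists_inner_eq_of_le_supp (hKc : IsCompact K) (hKv : Convex ℝ K) (hK0 : 0 ∈ K)
    (ξ : EuclideanSpace ℝ (Fin n)) {t : ℝ} (ht0 : 0 ≤ t) (ht : t ≤ supp K ξ) :
    ∃ x ∈ K, inner ℝ ξ x = t := by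
  have hf : Continuous fun y : EuclideanSpace ℝ (Fin n) => inner ℝ ξ y :=
    continuous_const.inner continuous_id
  have hsupp : supp K ξ ∈ (fun y => inner ℝ ξ y) '' K :=
    (hKc.image hf).sSup_mem ⟨_, mem_image_of_mem _ hK0⟩
  have h0 : (0 : ℝ) ∈ (fun y => inner ℝ ξ y) '' K := ⟨0, hK0, inner_zero_right ξ⟩
  exact (hKv.isPreconnected.image _ hf.continuousOn).Icc_subset h0 hsupp ⟨ht0, ht⟩

lemma supp_le_max_supp_of_subset_union_neg (hKc : IsCompact K) (hL0 : 0 ∈ L)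
    (hLK : L ⊆ K ∪ -K) (ξ : EuclideanSpace ℝ (Fin n)) :
    supp L ξ ≤ max (supp K ξ) (supp K (-ξ)) := by
  refine csSup_le ⟨_, mem_image_of_mem _ hL0⟩ ?_
  rintro _ ⟨z, hzL, rfl⟩
  rcases hLK hzL with hzK | hzK
  · exact le_max_of_le_left (inner_le_supp hKc hzK ξ)
  · refine le_max_of_le_right ?_
    simpa using inner_le_supp hKc (mem_neg.1 hzK) (-ξ)

lemma max_supp_le_max_supp_of_subset_union_neg (hKc : IsCompact K) (hL0 : 0 ∈ L)
    (hLK : L ⊆ K ∪ -K) (ξ : EuclideanSpace ℝ (Fin n)) :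
    max (supp L ξ) (supp L (-ξ)) ≤ max (supp K ξ) (supp K (-ξ)) :=
  max_le (supp_le_max_supp_of_subset_union_neg hKc hL0 hLK ξ)
    (by simpa [max_comm] using supp_le_max_supp_of_subset_union_neg hKc hL0 hLK (-ξ))

lemma min_supp_le_supp_neg (hKc : IsCompact K) (hKv : Convex ℝ K) (hK0 : 0 ∈ K)
    (hLc : IsCompact L) (hLv : Convex ℝ L) (hL0 : 0 ∈ L) (h : K \ L = -(L \ K))
    (ξ : EuclideanSpace ℝ (Fin n)) :
    min (supp K ξ) (supp K (-ξ)) ≤ supp L (-ξ) := by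
  by_contra! hlt
  set s := min (supp K ξ) (supp K (-ξ))
  have hs : 0 ≤ s := (supp_nonneg hLc hL0 _).trans hlt.le
  have hLP : Disjoint L (-{w | inner ℝ ξ w = s}) := by
    refine disjoint_left.2 fun w hwL hwP => ?_
    have : inner ℝ (-ξ) w = s := by simpa [inner_neg_right] using hwP
    linarith [inner_le_supp hLc hwL (-ξ)]
  have hP : IsPreconnected (L ∩ {w | inner ℝ ξ w = s}) :=
    (hLv.inter (convex_hyperplane (innerₛₗ ℝ ξ).isLinear s)).isPreconnected
  obtain ⟨x, hxK, hx⟩ := exists_inner_eq_of_le_supp hKc hKv hK0 ξ hs (min_le_left _ _)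
  obtain ⟨y, hyK, hy⟩ := exists_inner_eq_of_le_supp hKc hKv hK0 (-ξ) hs (min_le_right _ _)
  refine disjoint_left.1 (disjoint_neg_of_inter_nonempty hKc.isClosed h hLP hP ⟨x, hxK, hx⟩)
    hyK ?_
  simpa [inner_neg_right] using hy

lemma min_supp_le_min_supp (hKc : IsCompact K) (hKv : Convex ℝ K) (hK0 : 0 ∈ K)
    (hLc : IsCompact L) (hLv : Convex ℝ L) (hL0 : 0 ∈ L) (h : K \ L = -(L \ K))
    (ξ : EuclideanSpace ℝ (Fin n)) :
    min (supp K ξ) (supp K (-ξ)) ≤ min (supp L ξ) (supp L (-ξ)) :=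
  le_min (by simpa [min_comm] using min_supp_le_supp_neg hKc hKv hK0 hLc hLv hL0 h (-ξ))
    (min_supp_le_supp_neg hKc hKv hK0 hLc hLv hL0 h ξ)

end SupportFunction

theorem diff_symm_imp_support_pairs_eq {n : ℕ} (K L : Set (EuclideanSpace ℝ (Fin n)))
    (hKc : IsCompact K) (hKv : Convex ℝ K)
    (hK0 : (0 : EuclideanSpace ℝ (Fin n)) ∈ interior K)
    (hLc : IsCompact L) (hLv : Convex ℝ L)
    (hL0 : (0 : EuclideanSpace ℝ (Fin n)) ∈ interior L)
    (h : K \ L = -(L \ K)) :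
    ∀ ξ : EuclideanSpace ℝ (Fin n), ‖ξ‖ = 1 →
      ({supp K ξ, supp K (-ξ)} : Set ℝ) = {supp L ξ, supp L (-ξ)} := by
  intro ξ _
  have hK0' := interior_subset hK0
  have hL0' := interior_subset hL0
  have h' := diff_eq_neg_diff_comm h
  apply pair_eq_pair_of_min_eq_of_max_eq
  · exact le_antisymm (min_supp_le_min_supp hKc hKv hK0' hLc hLv hL0' h ξ)
      (min_supp_le_min_supp hLc hLv hL0' hKc hKv hK0' h' ξ)
  · exact le_antisymm
      (max_supp_le_max_supp_of_subset_union_neg hLc hK0'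
        (subset_union_neg_of_diff_eq_neg_diff h') ξ)
      (max_supp_le_max_supp_of_subset_union_neg hKc hL0'
        (subset_union_neg_of_diff_eq_neg_diff h) ξ)
end

section
/- Let K and L be convex bodies in ℝⁿ containing the origin in their interiors with K \ L = −(L \ K), and let V be a linear subspace of ℝⁿ. Then for every unit vector ξ ∈ V, the unordered pairs {h_{K|V}(ξ), h_{K|V}(−ξ)} and {h_{L|V}(ξ), h_{L|V}(−ξ)} coincide, where K|V denotes the orthogonal projection of K onto V. -/
open Set

/-- The orthogonal projection `K|V` of a set `K` onto a subspace `V`. -/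
noncomputable def projSet {n : ℕ} (V : Submodule ℝ (EuclideanSpace ℝ (Fin n)))
    (K : Set (EuclideanSpace ℝ (Fin n))) : Set (EuclideanSpace ℝ (Fin n)) :=
  (fun y => ((V.orthogonalProjection y : V) : EuclideanSpace ℝ (Fin n))) '' K

/-!
With `f = ⟪ξ, ·⟫`, a compact convex `K ∋ 0` has `f '' K = [-h_K(-ξ), h_K(ξ)]`, and
`h_{K|V} = h_K` on `V`. The hypothesis `K \ L = -(L \ K)` says exactly that `K ∪ -K = L ∪ -L` and
`K ∩ -K = L ∩ -L`. The first identity gives `f '' K ∪ -(f '' K) = f '' L ∪ -(f '' L)`, so the two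
pairs of support values have the same maximum. A connectedness argument on a segment turns the
second identity into `f '' K ∩ -(f '' K) = f '' L ∩ -(f '' L)`, so they also have the same minimum.
-/

section SymmetricParts

variable {G : Type*} [InvolutiveNeg G] {K L : Set G}

lemma union_neg_eq_of_diff_eq_neg_diff (h : K \ L = -(L \ K)) : K ∪ -K = L ∪ -L := by
  ext x
  have hx := Set.ext_iff.mp h x
  have hnx := Set.ext_iff.mp h (-x)
  simp only [mem_union, mem_sdiff, mem_neg, neg_neg] at hx hnx ⊢
  tauto

lemma inter_neg_eq_of_diff_eq_neg_diff (h : K \ L = -(L \ K)) : K ∩ -K = L ∩ -L := by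
  ext x
  have hx := Set.ext_iff.mp h x
  have hnx := Set.ext_iff.mp h (-x)
  simp only [mem_inter_iff, mem_sdiff, mem_neg, neg_neg] at hx hnx ⊢
  tauto

end SymmetricParts

lemma image_neg_eq_neg_image {M N F : Type*} [AddGroup M] [AddGroup N] [FunLike F M N]
    [AddMonoidHomClass F M N] (f : F) (s : Set M) : f '' (-s) = -(f '' s) := by
  simp only [← image_neg_eq_neg, image_image, map_neg]

section LinearFunctional

variable {E : Type*} [AddCommGroup E] [Module ℝ E] [TopologicalSpace E]
  [IsTopologicalAddGroup E] [ContinuousSMul ℝ E] {C D : Set E}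

/- Take `p ∈ D` and `q ∈ -D` on the hyperplane `f = t`. If `-t ∉ f '' C`, both lie in `C`, hence so
does the segment `[p, q]`; being connected and covered by the closed sets `D` and `-D`, it meets
`D ∩ -D = C ∩ -C` in some `z`, and then `-z ∈ C` with `f (-z) = -t`. -/
lemma neg_mem_image_of_union_neg_eq_of_inter_neg_eq (hC : Convex ℝ C) (hD : IsClosed D)
    (hunion : C ∪ -C = D ∪ -D) (hinter : C ∩ -C = D ∩ -D) (f : E →ₗ[ℝ] ℝ) {t : ℝ}
    (ht : t ∈ f '' D) (hnt : -t ∈ f '' D) : -t ∈ f '' C := by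
  by_contra hC'
  have mem_C : ∀ x ∈ D ∪ -D, f x = t → x ∈ C := by
    intro x hx hfx
    rcases hunion ▸ hx with hx | hx
    · exact hx
    · exact absurd ⟨-x, hx, by rw [map_neg, hfx]⟩ hC'
  obtain ⟨p, hpD, hfp⟩ := ht
  obtain ⟨q, hqD, hfq⟩ := hnt
  have hnqD : -q ∈ -D := by rwa [mem_neg, neg_neg]
  have hfnq : f (-q) = t := by rw [map_neg, hfq, neg_neg]
  have hseg : segment ℝ p (-q) ⊆ C :=
    hC.segment_subset (mem_C p (Or.inl hpD) hfp) (mem_C (-q) (Or.inr hnqD) hfnq)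
  have hcover : segment ℝ p (-q) ⊆ D ∪ -D := fun z hz => hunion ▸ Or.inl (hseg hz)
  obtain ⟨z, hz, hzD, hznD⟩ :=
    isPreconnected_closed_iff.mp (convex_segment p (-q)).isPreconnected D (-D) hD hD.neg hcover
      ⟨p, left_mem_segment ℝ p (-q), hpD⟩ ⟨-q, right_mem_segment ℝ p (-q), hnqD⟩
  have hfz : f z = t := by
    obtain ⟨a, b, -, -, hab, rfl⟩ := hz
    rw [map_add, map_smul, map_smul, hfp, hfnq, smul_eq_mul, smul_eq_mul, ← add_mul, hab, one_mul]
  have hnzC : -z ∈ C := (hinter ▸ ⟨hzD, hznD⟩ : z ∈ C ∩ -C).2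
  exact hC' ⟨-z, hnzC, by rw [map_neg, hfz]⟩

lemma image_inter_neg_image_subset (hC : Convex ℝ C) (hD : IsClosed D)
    (hunion : C ∪ -C = D ∪ -D) (hinter : C ∩ -C = D ∩ -D) (f : E →ₗ[ℝ] ℝ) :
    f '' D ∩ -(f '' D) ⊆ f '' C ∩ -(f '' C) := by
  rintro t ⟨ht, hnt⟩
  refine ⟨?_, neg_mem_image_of_union_neg_eq_of_inter_neg_eq hC hD hunion hinter f ht hnt⟩
  simpa using neg_mem_image_of_union_neg_eq_of_inter_neg_eq hC hD hunion hinter f hnt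
    (by rwa [neg_neg])

end LinearFunctional

section Intervals

variable {α : Type*} [AddCommGroup α] [LinearOrder α] [IsOrderedAddMonoid α]

lemma Icc_union_neg_Icc {a a' : α} (ha : 0 ≤ a) (ha' : 0 ≤ a') :
    Icc (-a') a ∪ -Icc (-a') a = Icc (-max a a') (max a a') := by
  rw [neg_Icc, neg_neg, Icc_union_Icc' (neg_le_self ha) (neg_le_self ha'), min_neg_neg,
    max_comm a']

lemma Icc_inter_neg_Icc (a a' : α) :
    Icc (-a') a ∩ -Icc (-a') a = Icc (-min a a') (min a a') := by
  rw [neg_Icc, neg_neg, Icc_inter_Icc, max_neg_neg, min_comm a' a]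

lemma pair_eq_of_Icc_union_neg_eq_of_Icc_inter_neg_eq {a a' b b' : α}
    (ha : 0 ≤ a) (ha' : 0 ≤ a') (hb : 0 ≤ b) (hb' : 0 ≤ b')
    (hunion : Icc (-a') a ∪ -Icc (-a') a = Icc (-b') b ∪ -Icc (-b') b)
    (hinter : Icc (-a') a ∩ -Icc (-a') a = Icc (-b') b ∩ -Icc (-b') b) :
    ({a, a'} : Set α) = {b, b'} := by
  rw [Icc_union_neg_Icc ha ha', Icc_union_neg_Icc hb hb',
    Icc_eq_Icc_iff (neg_le_self (le_max_of_le_left ha))] at hunion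
  rw [Icc_inter_neg_Icc, Icc_inter_neg_Icc, Icc_eq_Icc_iff (neg_le_self (le_min ha ha'))] at hinter
  rw [pair_eq_min_max a, pair_eq_min_max b, hunion.2, hinter.2]

end Intervals

section SupportFunction

variable {n : ℕ}

lemma supp_projSet_of_mem (V : Submodule ℝ (EuclideanSpace ℝ (Fin n)))
    (K : Set (EuclideanSpace ℝ (Fin n))) {ξ : EuclideanSpace ℝ (Fin n)} (hξ : ξ ∈ V) :
    supp (projSet V K) ξ = supp K ξ := by
  rw [supp, supp, projSet, image_image]
  refine congrArg sSup (image_congr fun y _ => ?_)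
  exact (V.coe_inner _ _).symm.trans (V.inner_orthogonalProjectionOnto_eq_of_mem_left ⟨ξ, hξ⟩ y)

lemma image_innerₛₗ_eq_Icc {K : Set (EuclideanSpace ℝ (Fin n))} (hKc : IsCompact K)
    (hKv : Convex ℝ K) (hne : K.Nonempty) (ξ : EuclideanSpace ℝ (Fin n)) :
    innerₛₗ ℝ ξ '' K = Icc (-supp K (-ξ)) (supp K ξ) := by
  have hcont := (innerₛₗ ℝ ξ).continuous_of_finiteDimensional
  have hsupp_neg : supp K (-ξ) = -sInf (innerₛₗ ℝ ξ '' K) := by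
    rw [← Real.sSup_neg, ← image_neg_eq_neg, image_image]
    simp [supp, inner_neg_left]
  rw [eq_Icc_of_connected_compact ((hKv.isConnected hne).image _ hcont.continuousOn)
    (hKc.image hcont), hsupp_neg, neg_neg]
  simp [supp]

end SupportFunction

theorem diff_symm_imp_proj_support_pairs {n : ℕ} (K L : Set (EuclideanSpace ℝ (Fin n)))
    (hKc : IsCompact K) (hKv : Convex ℝ K)
    (hK0 : (0 : EuclideanSpace ℝ (Fin n)) ∈ interior K)
    (hLc : IsCompact L) (hLv : Convex ℝ L)
    (hL0 : (0 : EuclideanSpace ℝ (Fin n)) ∈ interior L)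
    (h : K \ L = -(L \ K))
    (V : Submodule ℝ (EuclideanSpace ℝ (Fin n))) :
    ∀ ξ ∈ V, ‖ξ‖ = 1 →
      ({supp (projSet V K) ξ, supp (projSet V K) (-ξ)} : Set ℝ) =
        {supp (projSet V L) ξ, supp (projSet V L) (-ξ)} := by
  intro ξ hξ _
  rw [supp_projSet_of_mem V K hξ, supp_projSet_of_mem V K (V.neg_mem hξ),
    supp_projSet_of_mem V L hξ, supp_projSet_of_mem V L (V.neg_mem hξ)]
  have hK := image_innerₛₗ_eq_Icc hKc hKv ⟨0, interior_subset hK0⟩ ξ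
  have hL := image_innerₛₗ_eq_Icc hLc hLv ⟨0, interior_subset hL0⟩ ξ
  have h0K : (0 : ℝ) ∈ Icc (-supp K (-ξ)) (supp K ξ) := hK ▸ ⟨0, interior_subset hK0, map_zero _⟩
  have h0L : (0 : ℝ) ∈ Icc (-supp L (-ξ)) (supp L ξ) := hL ▸ ⟨0, interior_subset hL0, map_zero _⟩
  have hunion := union_neg_eq_of_diff_eq_neg_diff h
  have hinter := inter_neg_eq_of_diff_eq_neg_diff h
  refine pair_eq_of_Icc_union_neg_eq_of_Icc_inter_neg_eq h0K.2 (neg_nonpos.mp h0K.1) h0L.2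
    (neg_nonpos.mp h0L.1) ?_ ?_
  · rw [← hK, ← hL, ← image_neg_eq_neg_image, ← image_neg_eq_neg_image, ← image_union,
      ← image_union, hunion]
  · rw [← hK, ← hL]
    exact (image_inter_neg_image_subset hLv hKc.isClosed hunion.symm hinter.symm _).antisymm
      (image_inter_neg_image_subset hKv hLc.isClosed hunion hinter _)
end

section
/- For every n ≥ 2 there exist convex bodies K and L in ℝⁿ, containing the origin in their interiors, that are not congruent (i.e., there is no isometry T of ℝⁿ with T(K) = L) but satisfy K \ L = −(L \ K). Specifically, one may take K and L to be the convex polytopes obtained from a rectangular box R = [−a₁,a₁] × ⋯ × [−aₙ,aₙ] (with distinct positive a₁,…,aₙ) by truncating, with hyperplane cuts of sufficiently small depth λ > 0, two vertices u and v joined by an edge (for K), and the vertices u and −v (for L). -/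
/-!
Let `R = [-2, 2] × [-1, 1] × [-ε, ε]ᵐ` and cut off the vertex `u = (2, 1)` by `x₀ + x₁ ≤ 5/2`,
and the vertex `v = (-2, 1)` (for `K`) or `-v = (2, -1)` (for `L`) by `±(x₁ - x₀) ≤ 5/2`.
As `R = -R` and the cut at `-v` meets neither the cut at `u` nor that at `-u`, both `K \ L` and
`-(L \ K)` are the corner of `R` at `-v`.

`K` and `L` have different circumradii. `K` lies in the ball of radius `43/20` about
`(0, -1/4)`, while `L` contains `(-2, ±1)` and `(2, ±1/2)`. For points `v₁, …, v_N` and any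
`c`, `∑ᵢⱼ ‖vᵢ - vⱼ‖² ≤ 2N ∑ᵢ ‖vᵢ - c‖²`; for these four points the left side is `148`,
while a ball of radius `43/20` allows at most `32 (43/20)² < 148`.
-/

open Set

section Truncation

variable {E : Type*}

def truncate (R : Set E) (f g : E → ℝ) (a b : ℝ) : Set E :=
  R ∩ {x | f x ≤ a} ∩ {x | g x ≤ b}

theorem truncate_diff_truncate_neg [InvolutiveNeg E] {R : Set E} {f g : E → ℝ} {a b : ℝ}
    (hR : -R = R) (hf : Function.Odd f) (hg : Function.Odd g)
    (hcut : ∀ x ∈ R, b < -g x → |f x| ≤ a) :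
    truncate R f g a b \ truncate R f (-g) a b = -(truncate R f (-g) a b \ truncate R f g a b) := by
  ext x
  have hxR : -x ∈ R ↔ x ∈ R := by rw [← Set.mem_neg, hR]
  simp only [truncate, mem_sdiff, mem_inter_iff, mem_ofPred_eq, Set.mem_neg, Pi.neg_apply, hxR,
    hf x, hg x, neg_neg]
  by_cases hx : x ∈ R
  · by_cases hgx : b < -g x
    · have := abs_le.1 (hcut x hx hgx)
      grind
    · grind
  · simp [hx]

theorem Convex.truncate {F : Type*} [AddCommGroup F] [Module ℝ F] {R : Set F} {f g : F → ℝ}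
    (hR : Convex ℝ R) (hf : IsLinearMap ℝ f) (hg : IsLinearMap ℝ g) (a b : ℝ) :
    Convex ℝ (truncate R f g a b) :=
  (hR.inter (convex_halfSpace_le hf a)).inter (convex_halfSpace_le hg b)

variable [TopologicalSpace E] {R : Set E} {f g : E → ℝ} {a b : ℝ}

theorem IsCompact.truncate (hR : IsCompact R) (hf : Continuous f) (hg : Continuous g) :
    IsCompact (truncate R f g a b) :=
  (hR.inter_right (isClosed_le hf continuous_const)).inter_right (isClosed_le hg continuous_const)

theorem mem_interior_truncate {x : E} (hx : x ∈ interior R) (hf : Continuous f)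
    (hg : Continuous g) (ha : f x < a) (hb : g x < b) : x ∈ interior (truncate R f g a b) := by
  rw [truncate, interior_inter, interior_inter]
  have hlt {h : E → ℝ} {c : ℝ} (hh : Continuous h) (hc : h x < c) : x ∈ interior {y | h y ≤ c} :=
    mem_interior.2 ⟨{y | h y < c}, fun y (hy : h y < c) => (hy.le : h y ≤ c),
      isOpen_lt hh continuous_const, hc⟩
  exact ⟨⟨hx, hlt hf ha⟩, hlt hg hb⟩

end Truncation

section Box

variable {ι : Type*}

def box (a : ι → ℝ) : Set (EuclideanSpace ℝ ι) := {x | ∀ i, |x i| ≤ a i}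

variable (a : ι → ℝ)

theorem box_eq_preimage_pi :
    box a = EuclideanSpace.equiv ι ℝ ⁻¹' univ.pi fun i => Icc (-a i) (a i) := by
  ext x
  simp [box, abs_le, Pi.le_def, forall_and]

theorem neg_box : -box a = box a := by
  ext x
  simp [box]

theorem convex_box : Convex ℝ (box a) := by
  rw [box_eq_preimage_pi]
  exact (convex_pi fun i _ => convex_Icc _ _).linear_preimage
    (EuclideanSpace.equiv ι ℝ).toLinearMap

theorem isCompact_box : IsCompact (box a) := by
  rw [box_eq_preimage_pi]
  exact (EuclideanSpace.equiv ι ℝ).toHomeomorph.isCompact_preimage.2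
    (isCompact_univ_pi fun i => isCompact_Icc)

theorem zero_mem_interior_box [Finite ι] {a : ι → ℝ} (ha : ∀ i, 0 < a i) :
    0 ∈ interior (box a) := by
  rw [box_eq_preimage_pi, mem_interior_iff_mem_nhds]
  exact (EuclideanSpace.equiv ι ℝ).continuous.continuousAt.preimage_mem_nhds
    (set_pi_mem_nhds finite_univ fun i _ => Icc_mem_nhds (by simpa using ha i) (ha i))

end Box

section Circumradius

variable {ι E : Type*} [Fintype ι] [NormedAddCommGroup E] [InnerProductSpace ℝ E]

theorem sum_sum_dist_sq_le (v : ι → E) (c : E) :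
    ∑ i, ∑ j, dist (v i) (v j) ^ 2 ≤ 2 * Fintype.card ι * ∑ i, dist (v i) c ^ 2 := by
  set w := fun i => v i - c
  have hdist : ∀ i j, dist (v i) (v j) ^ 2 = ‖w i‖ ^ 2 - 2 * inner ℝ (w i) (w j) + ‖w j‖ ^ 2 := by
    intro i j
    rw [dist_eq_norm, ← norm_sub_sq_real]
    simp [w]
  have hsum : ∑ i, ∑ j, inner ℝ (w i) (w j) = ‖∑ i, w i‖ ^ 2 := by
    rw [← real_inner_self_eq_norm_sq, sum_inner]
    simp_rw [inner_sum]
  calc ∑ i, ∑ j, dist (v i) (v j) ^ 2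
      = 2 * Fintype.card ι * ∑ i, ‖w i‖ ^ 2 - 2 * ‖∑ i, w i‖ ^ 2 := by
        simp_rw [hdist, Finset.sum_add_distrib, Finset.sum_sub_distrib, Finset.sum_const,
          ← Finset.mul_sum, hsum, Finset.card_univ, nsmul_eq_mul]
        rw [← Finset.mul_sum]
        ring
    _ ≤ 2 * Fintype.card ι * ∑ i, ‖w i‖ ^ 2 := sub_le_self _ (by positivity)
    _ = 2 * Fintype.card ι * ∑ i, dist (v i) c ^ 2 := by simp [w, dist_eq_norm]

theorem not_subset_closedBall_of_lt_sum_sum_dist_sq {S : Set E} (v : ι → E) (hv : ∀ i, v i ∈ S)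
    {r : ℝ} (hr : 2 * Fintype.card ι ^ 2 * r ^ 2 < ∑ i, ∑ j, dist (v i) (v j) ^ 2) (c : E) :
    ¬ S ⊆ Metric.closedBall c r := by
  intro hS
  have hball : ∀ i, dist (v i) c ^ 2 ≤ r ^ 2 := fun i =>
    pow_le_pow_left₀ dist_nonneg (Metric.mem_closedBall.1 (hS (hv i))) 2
  have := (sum_sum_dist_sq_le v c).trans (mul_le_mul_of_nonneg_left
    (Finset.sum_le_sum fun i _ => hball i) (by positivity))
  simp only [Finset.sum_const, Finset.card_univ, nsmul_eq_mul] at this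
  nlinarith

theorem IsometryEquiv.image_ne_of_subset_closedBall {α β : Type*} [PseudoMetricSpace α]
    [PseudoMetricSpace β] (T : α ≃ᵢ β) {K : Set α} {L : Set β} {c : α} {r : ℝ}
    (hK : K ⊆ Metric.closedBall c r) (hL : ∀ c', ¬ L ⊆ Metric.closedBall c' r) : T '' K ≠ L := by
  rintro rfl
  exact hL (T c) (T.image_closedBall c r ▸ image_mono hK)

end Circumradius

namespace TruncatedBox

noncomputable section

variable (m : ℕ)

-- The `m` thin coordinates add at most `1/64` to squared distances.
def halfSides : Fin (m + 2) → ℝ := Fin.cons 2 (Fin.cons 1 fun _ => 1 / (4 * (m + 1)))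

def sumCoord : EuclideanSpace ℝ (Fin (m + 2)) →L[ℝ] ℝ :=
  EuclideanSpace.proj 0 + EuclideanSpace.proj 1

def diffCoord : EuclideanSpace ℝ (Fin (m + 2)) →L[ℝ] ℝ :=
  EuclideanSpace.proj 1 - EuclideanSpace.proj 0

def bodyK : Set (EuclideanSpace ℝ (Fin (m + 2))) :=
  truncate (box (halfSides m)) (sumCoord m) (diffCoord m) (5 / 2) (5 / 2)

def bodyL : Set (EuclideanSpace ℝ (Fin (m + 2))) :=
  truncate (box (halfSides m)) (sumCoord m) (-diffCoord m) (5 / 2) (5 / 2)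

def planePt (p q : ℝ) : EuclideanSpace ℝ (Fin (m + 2)) := WithLp.toLp 2 (Fin.cons p (Fin.cons q 0))

variable {m}

theorem halfSides_pos : ∀ i, 0 < halfSides m i := by
  simp only [Fin.forall_fin_succ, halfSides, Fin.cons_zero, Fin.cons_succ]
  exact ⟨two_pos, one_pos, fun _ => by positivity⟩

theorem mem_box_halfSides {x : EuclideanSpace ℝ (Fin (m + 2))} :
    x ∈ box (halfSides m) ↔
      |x 0| ≤ 2 ∧ |x 1| ≤ 1 ∧ ∀ j : Fin m, |x j.succ.succ| ≤ 1 / (4 * (m + 1)) := by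
  simp [box, Fin.forall_fin_succ, halfSides]

theorem bodyK_diff_bodyL : bodyK m \ bodyL m = -(bodyL m \ bodyK m) := by
  refine truncate_diff_truncate_neg (neg_box _) (fun x => map_neg _ x) (fun x => map_neg _ x) ?_
  intro x hx hcut
  rw [mem_box_halfSides, abs_le, abs_le] at hx
  simp only [sumCoord, diffCoord, add_apply, sub_apply, PiLp.proj_apply] at hcut ⊢
  rw [abs_le]
  constructor <;> linarith

theorem dist_planePt_sq (p q p' q' : ℝ) :
    dist (planePt m p q) (planePt m p' q') ^ 2 = (p - p') ^ 2 + (q - q') ^ 2 := by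
  simp [EuclideanSpace.dist_sq_eq, Fin.sum_univ_succ, planePt, Real.dist_eq, sq_abs]

theorem bodyK_subset_closedBall : bodyK m ⊆ Metric.closedBall (planePt m 0 (-1 / 4)) (43 / 20) := by
  rintro x ⟨⟨hbox, hsum⟩, hdiff⟩
  rw [mem_box_halfSides, abs_le, abs_le] at hbox
  obtain ⟨⟨h0l, h0u⟩, ⟨h1l, h1u⟩, htail⟩ := hbox
  simp only [sumCoord, diffCoord, add_apply, sub_apply, PiLp.proj_apply, mem_ofPred_eq]
    at hsum hdiff
  have hhead : x 0 ^ 2 + (x 1 + 1 / 4) ^ 2 ≤ 73 / 16 := by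
    rcases le_or_gt (x 1) (1 / 2) with h | h <;> nlinarith
  have htail' : ∑ j : Fin m, x j.succ.succ ^ 2 ≤ 1 / 64 := by
    calc ∑ j : Fin m, x j.succ.succ ^ 2 ≤ ∑ j : Fin m, (1 / (4 * (m + 1) : ℝ)) ^ 2 :=
          Finset.sum_le_sum fun j _ => sq_le_sq' (abs_le.1 (htail j)).1 (abs_le.1 (htail j)).2
      _ = m / (16 * (m + 1) ^ 2) := by
          simp only [Finset.sum_const, Finset.card_univ, Fintype.card_fin, nsmul_eq_mul]
          field_simp
          ring
      _ ≤ 1 / 64 := by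
          rw [div_le_div_iff₀ (by positivity) (by norm_num)]
          nlinarith [sq_nonneg (m - 1 : ℝ)]
  rw [Metric.mem_closedBall, ← sq_le_sq₀ dist_nonneg (by norm_num), EuclideanSpace.dist_sq_eq]
  simp only [planePt, Real.dist_eq, sq_abs, Fin.sum_univ_succ, Fin.cons_zero, sub_zero,
    Fin.cons_succ, Fin.succ_zero_eq_one, Pi.zero_apply]
  linarith

theorem not_bodyL_subset_closedBall (c : EuclideanSpace ℝ (Fin (m + 2))) :
    ¬ bodyL m ⊆ Metric.closedBall c (43 / 20) := by
  refine not_subset_closedBall_of_lt_sum_sum_dist_sq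
    ![planePt m (-2) 1, planePt m (-2) (-1), planePt m 2 (1 / 2), planePt m 2 (-1 / 2)] ?_ ?_ c
  · have hm : (0 : ℝ) ≤ m + 1 := by positivity
    intro i
    fin_cases i <;> norm_num [bodyL, truncate, mem_box_halfSides, planePt, sumCoord, diffCoord, hm]
  · simp only [Fin.sum_univ_four, Matrix.cons_val, dist_planePt_sq]
    norm_num

end

end TruncatedBox

theorem exists_noncongruent_bodies_diff_symm {n : ℕ} (hn : 2 ≤ n) :
    ∃ K L : Set (EuclideanSpace ℝ (Fin n)),
      IsCompact K ∧ Convex ℝ K ∧ (0 : EuclideanSpace ℝ (Fin n)) ∈ interior K ∧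
      IsCompact L ∧ Convex ℝ L ∧ (0 : EuclideanSpace ℝ (Fin n)) ∈ interior L ∧
      (¬ ∃ T : EuclideanSpace ℝ (Fin n) ≃ᵢ EuclideanSpace ℝ (Fin n), T '' K = L) ∧
      K \ L = -(L \ K) := by
  open TruncatedBox in
  obtain ⟨m, rfl⟩ := Nat.exists_eq_add_of_le' hn
  have hf := (sumCoord m).continuous
  have hg := (diffCoord m).continuous
  have hR := zero_mem_interior_box (halfSides_pos (m := m))
  refine ⟨bodyK m, bodyL m,
    (isCompact_box _).truncate hf hg,
    (convex_box _).truncate (sumCoord m).isLinear (diffCoord m).isLinear _ _,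
    mem_interior_truncate hR hf hg (by simp) (by simp),
    (isCompact_box _).truncate hf hg.neg,
    (convex_box _).truncate (sumCoord m).isLinear (-diffCoord m).isLinear _ _,
    mem_interior_truncate hR hf hg.neg (by simp) (by simp),
    fun ⟨T, hT⟩ => T.image_ne_of_subset_closedBall bodyK_subset_closedBall
      not_bodyL_subset_closedBall hT,
    bodyK_diff_bodyL⟩
end

section
/- Let K and L be convex bodies in ℝⁿ containing the origin in their interiors such that {ρ_K(ξ), ρ_K(−ξ)} = {ρ_L(ξ), ρ_L(−ξ)} as unordered pairs for every unit vector ξ. Then for every k-dimensional linear subspace H (1 ≤ k ≤ n−1) and every i-dimensional subspace V ⊆ H (1 ≤ i ≤ k), the orthogonal projections satisfy vol_i((K ∩ H)|V) = vol_i((L ∩ H)|V). -/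
open Set MeasureTheory

/-- The (dim V)-dimensional volume of a subset `S` of a subspace `V`. -/
noncomputable def volIn {n : ℕ} (V : Submodule ℝ (EuclideanSpace ℝ (Fin n)))
    (S : Set (EuclideanSpace ℝ (Fin n))) : ENNReal :=
  volume ((Subtype.val ⁻¹' S) : Set V)

/-!
The radial-pair condition says exactly that `K ∪ -K = L ∪ -L` and `K ∩ -K = L ∩ -L`, and this
condition passes to sections by subspaces. It also passes to linear images of compact convex sets:
for unions this is immediate, and for intersections it comes from a separation and connectedness
argument. For sets in this relation `K \ L = -(L \ K)`, so reflection invariance of volume gives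
`vol K = vol (K ∩ L) + vol (K \ L) = vol (K ∩ L) + vol (L \ K) = vol L`.
-/

section Reflection

variable {α : Type*} [InvolutiveNeg α] {A B : Set α}

theorem Set.diff_eq_neg_diff_of_union_neg_eq_of_inter_neg_eq (hU : A ∪ -A = B ∪ -B)
    (hI : A ∩ -A = B ∩ -B) : A \ B = -(B \ A) := by
  ext x
  have hUx := Set.ext_iff.1 hU x
  have hIx := Set.ext_iff.1 hI x
  simp only [mem_union, mem_inter_iff, mem_sdiff, mem_neg] at hUx hIx ⊢
  tauto

theorem MeasureTheory.measure_eq_of_union_neg_eq_of_inter_neg_eq [MeasurableSpace α]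
    [MeasurableNeg α] (μ : Measure α) [μ.IsNegInvariant] (hA : MeasurableSet A)
    (hB : MeasurableSet B) (hU : A ∪ -A = B ∪ -B) (hI : A ∩ -A = B ∩ -B) : μ A = μ B := by
  have hdiff := Set.diff_eq_neg_diff_of_union_neg_eq_of_inter_neg_eq hU hI
  calc μ A = μ (A ∩ B) + μ (A \ B) := (measure_inter_add_sdiff A hB).symm
    _ = μ (B ∩ A) + μ (B \ A) := by rw [hdiff, Measure.measure_neg, inter_comm]
    _ = μ B := measure_inter_add_sdiff B hA

theorem Set.inter_neg_subset_inter_neg_of_subset {P Q : Set α} (h : P ∩ -P ⊆ Q) :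
    P ∩ -P ⊆ Q ∩ -Q :=
  subset_inter h (by simpa [inter_comm] using neg_subset_neg.2 h)

theorem Set.union_neg_eq_and_inter_neg_eq_inter {H : Set α} (hH : -H = H)
    (hU : A ∪ -A = B ∪ -B) (hI : A ∩ -A = B ∩ -B) :
    A ∩ H ∪ -(A ∩ H) = B ∩ H ∪ -(B ∩ H) ∧ A ∩ H ∩ -(A ∩ H) = B ∩ H ∩ -(B ∩ H) := by
  simp only [inter_neg, hH, ← union_inter_distrib_right, inter_inter_inter_comm _ H, inter_self,
    hU, hI, and_self]

end Reflection

section Projection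

variable {E F : Type*} [NormedAddCommGroup E] [NormedSpace ℝ E]
  [NormedAddCommGroup F] [NormedSpace ℝ F] {A B : Set E}

/-- If `B` stayed below level `s`, then `-x, y ∈ B`, and the segment `[-x, y] ⊆ B` at level `-s`
would be covered by the closed sets `A` and `-A` while missing `A ∩ -A = B ∩ -B`; by connectedness
it lies in one of them, and the corresponding endpoint puts `x` or `-y` into `B`. -/
theorem exists_mem_le_apply_of_union_neg_eq_of_inter_neg_eq (hA : IsClosed A)
    (hB : Convex ℝ B) (hU : A ∪ -A = B ∪ -B) (hI : A ∩ -A = B ∩ -B) (g : E →ₗ[ℝ] ℝ)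
    {s : ℝ} {x y : E} (hxA : x ∈ A) (hyA : y ∈ A) (hgx : g x = s) (hgy : g y = -s) :
    ∃ b ∈ B, s ≤ g b := by
  by_contra! hlt
  have hnot_neg_mem : ∀ q, g q = -s → q ∉ -B := fun q hq hqB => by
    simpa [hq] using hlt _ (mem_neg.1 hqB)
  have hxB : -x ∈ B := by
    rcases (hU ▸ mem_union_left _ hxA : x ∈ B ∪ -B) with hx | hx
    · exact absurd (hlt x hx) (by simp [hgx])
    · exact hx
  have hyB : y ∈ B := by
    rcases (hU ▸ mem_union_left _ hyA : y ∈ B ∪ -B) with hy | hy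
    · exact hy
    · exact absurd hy (hnot_neg_mem y hgy)
  have hlevel : segment ℝ (-x) y ⊆ {q | g q = -s} :=
    (convex_hyperplane g.isLinear (-s)).segment_subset (by simp [hgx]) hgy
  have hSB : segment ℝ (-x) y ⊆ B := hB.segment_subset hxB hyB
  have hcover : segment ℝ (-x) y ⊆ A ∪ -A := hU ▸ hSB.trans subset_union_left
  have hmiss : segment ℝ (-x) y ∩ (A ∩ -A) = ∅ := by
    rw [hI, eq_empty_iff_forall_notMem]
    exact fun q ⟨hq, _, hqB⟩ => hnot_neg_mem q (hlevel hq) hqB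
  rcases isPreconnected_iff_subset_of_disjoint_closed.1 (convex_segment (-x) y).isPreconnected
      A (-A) hA hA.neg hcover hmiss with hSA | hSA
  · have hx : x ∈ B ∩ -B := hI ▸ ⟨hxA, hSA (left_mem_segment ℝ _ _)⟩
    exact absurd (hlt x hx.1) (by simp [hgx])
  · have hy : y ∈ B ∩ -B := hI ▸ ⟨hyA, hSA (right_mem_segment ℝ _ _)⟩
    exact hnot_neg_mem y hgy hy.2

theorem image_inter_neg_subset_image_of_union_neg_eq (π : E →L[ℝ] F) (hA : IsClosed A)
    (hBc : IsCompact B) (hBv : Convex ℝ B) (hU : A ∪ -A = B ∪ -B) (hI : A ∩ -A = B ∩ -B) :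
    π '' A ∩ -(π '' A) ⊆ π '' B := by
  rintro _ ⟨⟨x, hxA, rfl⟩, ⟨y, hyA, hy⟩⟩
  by_contra hxB
  obtain ⟨f, c, hfB, hfx⟩ := geometric_hahn_banach_closed_point (hBv.linear_image π.toLinearMap)
    (hBc.image π.continuous).isClosed hxB
  obtain ⟨b, hb, hle⟩ := exists_mem_le_apply_of_union_neg_eq_of_inter_neg_eq hA hBv hU hI
    (f.comp π).toLinearMap hxA hyA rfl (by simp [hy])
  exact (hfB _ ⟨b, hb, rfl⟩).not_ge (hfx.le.trans hle)

theorem image_union_neg_eq_and_image_inter_neg_eq (π : E →L[ℝ] F)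
    (hAc : IsCompact A) (hAv : Convex ℝ A) (hBc : IsCompact B) (hBv : Convex ℝ B)
    (hU : A ∪ -A = B ∪ -B) (hI : A ∩ -A = B ∩ -B) :
    π '' A ∪ -(π '' A) = π '' B ∪ -(π '' B) ∧ π '' A ∩ -(π '' A) = π '' B ∩ -(π '' B) := by
  refine ⟨by rw [← image_neg, ← image_union, hU, image_union, image_neg], ?_⟩
  exact (inter_neg_subset_inter_neg_of_subset
      (image_inter_neg_subset_image_of_union_neg_eq π hAc.isClosed hBc hBv hU hI)).antisymm
    (inter_neg_subset_inter_neg_of_subset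
      (image_inter_neg_subset_image_of_union_neg_eq π hBc.isClosed hAc hAv hU.symm hI.symm))

end Projection

section Radial

variable {n : ℕ} {K L : Set (EuclideanSpace ℝ (Fin n))}

theorem smul_mem_iff_le_radial (hKc : IsCompact K) (hKv : Convex ℝ K) (hK0 : 0 ∈ interior K)
    {ξ : EuclideanSpace ℝ (Fin n)} (hξ : ξ ≠ 0) {r : ℝ} (hr : 0 < r) :
    r • ξ ∈ K ↔ r ≤ radial K ξ := by
  set S := {r : ℝ | 0 < r ∧ r • ξ ∈ K}
  have hT : IsCompact ((fun r : ℝ => r • ξ) ⁻¹' K) :=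
    (isClosedEmbedding_smul_left hξ).isCompact_preimage hKc
  have hS_bdd : BddAbove S := hT.bddAbove.mono fun _ hs => hs.2
  obtain ⟨r₀, hr₀K, hr₀⟩ : ∃ r₀ : ℝ, r₀ • ξ ∈ K ∧ 0 < r₀ := by
    have hsmul : Filter.Tendsto (· • ξ) (nhdsWithin (0 : ℝ) (Ioi 0)) (nhds 0) :=
      ((continuous_id.smul continuous_const).tendsto' 0 0 (zero_smul ℝ ξ)).mono_left
        nhdsWithin_le_nhds
    exact ((hsmul.eventually (mem_interior_iff_mem_nhds.1 hK0)).and self_mem_nhdsWithin).exists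
  have hpos : 0 < radial K ξ := hr₀.trans_le (le_csSup hS_bdd ⟨hr₀, hr₀K⟩)
  have hmem : radial K ξ • ξ ∈ K :=
    closure_minimal (fun _ hs => hs.2) hT.isClosed (csSup_mem_closure ⟨r₀, hr₀, hr₀K⟩ hS_bdd)
  refine ⟨fun h => le_csSup hS_bdd ⟨hr, h⟩, fun h => ?_⟩
  have hscale : r • ξ = (r / radial K ξ) • radial K ξ • ξ := by
    rw [smul_smul, div_mul_cancel₀ _ hpos.ne']
  rw [hscale]
  exact hKv.smul_mem_of_zero_mem (interior_subset hK0) hmem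
    ⟨(div_pos hr hpos).le, (div_le_one hpos).2 h⟩

theorem mem_iff_norm_le_radial (hKc : IsCompact K) (hKv : Convex ℝ K) (hK0 : 0 ∈ interior K)
    {x : EuclideanSpace ℝ (Fin n)} (hx : x ≠ 0) : x ∈ K ↔ ‖x‖ ≤ radial K (‖x‖⁻¹ • x) := by
  have hnx : 0 < ‖x‖ := norm_pos_iff.2 hx
  conv_lhs => rw [← smul_inv_smul₀ hnx.ne' x]
  exact smul_mem_iff_le_radial hKc hKv hK0 (smul_ne_zero (inv_ne_zero hnx.ne') hx) hnx

theorem mem_neg_iff_norm_le_radial (hKc : IsCompact K) (hKv : Convex ℝ K) (hK0 : 0 ∈ interior K)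
    {x : EuclideanSpace ℝ (Fin n)} (hx : x ≠ 0) : x ∈ -K ↔ ‖x‖ ≤ radial K (-(‖x‖⁻¹ • x)) := by
  rw [mem_neg, mem_iff_norm_le_radial hKc hKv hK0 (neg_ne_zero.2 hx), norm_neg, smul_neg]

theorem mem_union_neg_iff_norm_le_sSup (hKc : IsCompact K) (hKv : Convex ℝ K)
    (hK0 : 0 ∈ interior K) {x : EuclideanSpace ℝ (Fin n)} (hx : x ≠ 0) :
    x ∈ K ∪ -K ↔ ‖x‖ ≤ sSup {radial K (‖x‖⁻¹ • x), radial K (-(‖x‖⁻¹ • x))} := by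
  rw [csSup_pair, le_sup_iff, mem_union, mem_iff_norm_le_radial hKc hKv hK0 hx,
    mem_neg_iff_norm_le_radial hKc hKv hK0 hx]

theorem mem_inter_neg_iff_norm_le_sInf (hKc : IsCompact K) (hKv : Convex ℝ K)
    (hK0 : 0 ∈ interior K) {x : EuclideanSpace ℝ (Fin n)} (hx : x ≠ 0) :
    x ∈ K ∩ -K ↔ ‖x‖ ≤ sInf {radial K (‖x‖⁻¹ • x), radial K (-(‖x‖⁻¹ • x))} := by
  rw [csInf_pair, le_inf_iff, mem_inter_iff, mem_iff_norm_le_radial hKc hKv hK0 hx,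
    mem_neg_iff_norm_le_radial hKc hKv hK0 hx]

theorem union_neg_eq_and_inter_neg_eq_of_radial_pairs_eq
    (hKc : IsCompact K) (hKv : Convex ℝ K) (hK0 : 0 ∈ interior K)
    (hLc : IsCompact L) (hLv : Convex ℝ L) (hL0 : 0 ∈ interior L)
    (h : ∀ ξ : EuclideanSpace ℝ (Fin n), ‖ξ‖ = 1 →
      ({radial K ξ, radial K (-ξ)} : Set ℝ) = {radial L ξ, radial L (-ξ)}) :
    K ∪ -K = L ∪ -L ∧ K ∩ -K = L ∩ -L := by
  have hpair (x : EuclideanSpace ℝ (Fin n)) (hx : x ≠ 0) :=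
    h (‖x‖⁻¹ • x) (norm_smul_inv_norm (𝕜 := ℝ) hx)
  refine ⟨ext fun x => ?_, ext fun x => ?_⟩ <;> rcases eq_or_ne x 0 with rfl | hx
  · simp [interior_subset hK0, interior_subset hL0]
  · rw [mem_union_neg_iff_norm_le_sSup hKc hKv hK0 hx, hpair x hx,
      mem_union_neg_iff_norm_le_sSup hLc hLv hL0 hx]
  · simp [interior_subset hK0, interior_subset hL0]
  · rw [mem_inter_neg_iff_norm_le_sInf hKc hKv hK0 hx, hpair x hx,
      mem_inter_neg_iff_norm_le_sInf hLc hLv hL0 hx]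

end Radial

theorem preimage_coe_projSet {n : ℕ} (V : Submodule ℝ (EuclideanSpace ℝ (Fin n)))
    (C : Set (EuclideanSpace ℝ (Fin n))) :
    ((↑) ⁻¹' projSet V C : Set V) = V.orthogonalProjectionOnto '' C := by
  rw [projSet, ← image_image, Subtype.val_injective.preimage_image]

theorem radial_pairs_eq_imp_section_proj_volumes_eq {n : ℕ}
    (K L : Set (EuclideanSpace ℝ (Fin n)))
    (hKc : IsCompact K) (hKv : Convex ℝ K)
    (hK0 : (0 : EuclideanSpace ℝ (Fin n)) ∈ interior K)
    (hLc : IsCompact L) (hLv : Convex ℝ L)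
    (hL0 : (0 : EuclideanSpace ℝ (Fin n)) ∈ interior L)
    (h : ∀ ξ : EuclideanSpace ℝ (Fin n), ‖ξ‖ = 1 →
      ({radial K ξ, radial K (-ξ)} : Set ℝ) = {radial L ξ, radial L (-ξ)}) :
    ∀ (i k : ℕ), 1 ≤ i → i ≤ k → k ≤ n - 1 →
      ∀ H V : Submodule ℝ (EuclideanSpace ℝ (Fin n)),
        Module.finrank ℝ H = k → Module.finrank ℝ V = i → V ≤ H →
        volIn V (projSet V (K ∩ (H : Set (EuclideanSpace ℝ (Fin n))))) =
          volIn V (projSet V (L ∩ (H : Set (EuclideanSpace ℝ (Fin n))))) := by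
  intro i k _ _ _ H V _ _ _
  obtain ⟨hU, hI⟩ := union_neg_eq_and_inter_neg_eq_of_radial_pairs_eq hKc hKv hK0 hLc hLv hL0 h
  obtain ⟨hUH, hIH⟩ := union_neg_eq_and_inter_neg_eq_inter H.neg_coe hU hI
  have hH : IsClosed (H : Set (EuclideanSpace ℝ (Fin n))) := H.closed_of_finiteDimensional
  have hKH : IsCompact (K ∩ H) := hKc.inter_right hH
  have hLH : IsCompact (L ∩ H) := hLc.inter_right hH
  obtain ⟨hUV, hIV⟩ := image_union_neg_eq_and_image_inter_neg_eq V.orthogonalProjectionOnto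
    hKH (hKv.inter H.convex) hLH (hLv.inter H.convex) hUH hIH
  rw [volIn, volIn, preimage_coe_projSet, preimage_coe_projSet]
  exact measure_eq_of_union_neg_eq_of_inter_neg_eq volume
    (hKH.image V.orthogonalProjectionOnto.continuous).isClosed.measurableSet
    (hLH.image V.orthogonalProjectionOnto.continuous).isClosed.measurableSet hUV hIV
end

section
/- There exist noncongruent convex bodies K and L in ℝⁿ (containing the origin in their interiors) such that for all integers i, k with 1 ≤ i ≤ k ≤ n−1 and every k-dimensional linear subspace H of ℝⁿ, the intrinsic volumes satisfy V_i(K ∩ H) = V_i(L ∩ H). -/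
open Set MeasureTheory Pointwise

/-- The volume of the `j`-dimensional Euclidean unit ball. -/
noncomputable def kball (j : ℕ) : ℝ :=
  (volume (Metric.closedBall (0 : EuclideanSpace ℝ (Fin j)) 1)).toReal

/-- `Vfun` is the family of intrinsic volumes: it satisfies Steiner's formula
`vol_n(A + ε B₂ⁿ) = ∑_{i=0}^n κ_{n-i} V_i(A) ε^{n-i}` for every nonempty compact
convex set `A` and every `ε ≥ 0`. -/
def IsIntrinsicVolumes {n : ℕ} (Vfun : ℕ → Set (EuclideanSpace ℝ (Fin n)) → ℝ) : Prop :=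
  ∀ A : Set (EuclideanSpace ℝ (Fin n)), IsCompact A → Convex ℝ A → A.Nonempty →
    ∀ ε : ℝ, 0 ≤ ε →
      (volume (A + ε • Metric.closedBall (0 : EuclideanSpace ℝ (Fin n)) 1)).toReal =
        ∑ i ∈ Finset.range (n + 1), kball (n - i) * Vfun i A * ε ^ (n - i)

/-!
Let `A` be a convex body whose sections by the coordinate hyperplanes `x₀ = 0` and `x₁ = 0` are
origin-symmetric, and let `B` keep `A` on the quadrants `x₀ x₁ ≥ 0` while putting `-A` on the
quadrants `x₀ x₁ ≤ 0`. If `B` is convex, then `vol (A + C) = vol (B + C)` for every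
origin-symmetric convex body `C`. Because `(X + C) ∩ (Y + C) = (X ∩ Y) + C` when `X ∪ Y` is
convex, the quantity `P ↦ vol (P + C)` satisfies inclusion–exclusion when a convex set is cut by a
hyperplane. Cutting `A` and `B` along both coordinate hyperplanes writes each side as the same
combination of terms from the four quadrant pieces and the walls: `B` has the same walls as `A`,
and its pieces in the second and fourth quadrants are the reflections of those of `A` in the
fourth and second quadrants. A linear subspace `H` is origin-symmetric, so `A ∩ H` and `B ∩ H`
are related in the same way. Taking `C = ε B₂ⁿ` in Steiner's formula then shows that the two
sections have the same intrinsic volumes.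

For `A` we take a pentagon times a cube. It lies in a ball of radius `√(17/4 + 4m)`, but the
pentagon in `B` has the larger circumradius `17/8`, so `A` and `B` are not congruent.
-/

section Cut

variable {E : Type*} [NormedAddCommGroup E] [NormedSpace ℝ E]

/-- The segment from `x ∈ X` to `y ∈ Y` stays in `X ∪ Y`, so by connectedness it meets `X ∩ Y`. -/
theorem inter_add_eq_add_of_convex_union {X Y C : Set E} (hX : IsClosed X) (hY : IsClosed Y)
    (hXY : Convex ℝ (X ∪ Y)) (hC : Convex ℝ C) : (X + C) ∩ (Y + C) = (X ∩ Y) + C := by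
  refine Subset.antisymm ?_ (subset_inter (add_subset_add_right inter_subset_left)
    (add_subset_add_right inter_subset_right))
  rintro z ⟨⟨x, hx, c, hc, rfl⟩, ⟨y, hy, d, hd, hyz⟩⟩
  have hseg : segment ℝ x y ⊆ X ∪ Y := hXY.segment_subset (Or.inl hx) (Or.inr hy)
  obtain ⟨w, hw, hwX, hwY⟩ := isPreconnected_closed_iff.1 (convex_segment x y).isPreconnected
    X Y hX hY hseg ⟨x, left_mem_segment ℝ x y, hx⟩ ⟨y, right_mem_segment ℝ x y, hy⟩
  obtain ⟨a, b, ha, hb, hab, rfl⟩ := hw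
  refine ⟨a • x + b • y, ⟨hwX, hwY⟩, a • c + b • d, hC hc hd ha hb hab, ?_⟩
  have hd' : d = x + c - y := by simp only at hyz; rw [← hyz]; abel
  obtain rfl : a = 1 - b := by linarith
  simp only [hd']
  module

variable [MeasurableSpace E] [BorelSpace E] (μ : Measure E) {C : Set E}

theorem measure_union_add_add_measure_inter_add {X Y : Set E} (hX : IsClosed X)
    (hY : IsClosed Y) (hXY : Convex ℝ (X ∪ Y)) (hC : IsCompact C) (hCc : Convex ℝ C) :
    μ ((X ∪ Y) + C) + μ ((X ∩ Y) + C) = μ (X + C) + μ (Y + C) := by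
  rw [union_add, ← inter_add_eq_add_of_convex_union hX hY hXY hCc]
  exact measure_union_add_inter _ (hY.add_right_of_isCompact hC).measurableSet

theorem measure_add_add_measure_inter_eq_zero_add {A : Set E} (hA : IsClosed A)
    (hAc : Convex ℝ A) (hC : IsCompact C) (hCc : Convex ℝ C) (f : E →L[ℝ] ℝ) :
    μ (A + C) + μ (A ∩ {x | f x = 0} + C) =
      μ (A ∩ {x | 0 ≤ f x} + C) + μ (A ∩ {x | f x ≤ 0} + C) := by
  have hunion : A ∩ {x | 0 ≤ f x} ∪ A ∩ {x | f x ≤ 0} = A := by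
    rw [← inter_union_distrib_left, inter_eq_left]
    exact fun x _ => le_total 0 (f x)
  have hinter : A ∩ {x | 0 ≤ f x} ∩ (A ∩ {x | f x ≤ 0}) = A ∩ {x | f x = 0} := by
    ext x
    constructor
    · rintro ⟨⟨hx, h₀⟩, -, h₁⟩
      exact ⟨hx, le_antisymm h₁ h₀⟩
    · rintro ⟨hx, h⟩
      exact ⟨⟨hx, h.ge⟩, hx, h.le⟩
  have := measure_union_add_add_measure_inter_add μ
    (hA.inter (isClosed_le continuous_const f.continuous))
    (hA.inter (isClosed_le f.continuous continuous_const)) (by rwa [hunion]) hC hCc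
  rwa [hunion, hinter] at this

theorem measure_add_add_measure_walls_eq_sum_quadrants {A : Set E} (hA : IsClosed A)
    (hAc : Convex ℝ A) (hC : IsCompact C) (hCc : Convex ℝ C) (f g : E →L[ℝ] ℝ) :
    μ (A + C) + μ (A ∩ {x | g x = 0} + C) + μ (A ∩ ({x | 0 ≤ g x} ∩ {x | f x = 0}) + C) +
        μ (A ∩ ({x | g x ≤ 0} ∩ {x | f x = 0}) + C) =
      μ (A ∩ ({x | 0 ≤ g x} ∩ {x | 0 ≤ f x}) + C) +
        μ (A ∩ ({x | 0 ≤ g x} ∩ {x | f x ≤ 0}) + C) +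
        μ (A ∩ ({x | g x ≤ 0} ∩ {x | 0 ≤ f x}) + C) +
        μ (A ∩ ({x | g x ≤ 0} ∩ {x | f x ≤ 0}) + C) := by
  have hcut := measure_add_add_measure_inter_eq_zero_add μ hA hAc hC hCc g
  have hupper := measure_add_add_measure_inter_eq_zero_add μ
    (hA.inter (isClosed_le continuous_const g.continuous))
    (hAc.inter (convex_halfSpace_ge g.isLinear 0)) hC hCc f
  have hlower := measure_add_add_measure_inter_eq_zero_add μ
    (hA.inter (isClosed_le g.continuous continuous_const))
    (hAc.inter (convex_halfSpace_le g.isLinear 0)) hC hCc f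
  simp only [inter_assoc] at hupper hlower
  calc _ = (μ (A + C) + μ (A ∩ {x | g x = 0} + C)) +
        μ (A ∩ ({x | 0 ≤ g x} ∩ {x | f x = 0}) + C) +
        μ (A ∩ ({x | g x ≤ 0} ∩ {x | f x = 0}) + C) := rfl
    _ = _ := by rw [hcut, add_assoc, add_add_add_comm, hupper, hlower, ← add_assoc]

end Cut

theorem measure_neg_add_of_neg_eq {G : Type*} [AddCommGroup G] [MeasurableSpace G]
    [MeasurableNeg G] (μ : Measure G) [μ.IsNegInvariant] {C : Set G} (hC : -C = C) (S : Set G) :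
    μ (-S + C) = μ (S + C) := by
  rw [← Measure.measure_neg, neg_add, neg_neg, hC]

section QuadrantSwap

variable {E : Type*} [NormedAddCommGroup E] [NormedSpace ℝ E]

/-- Exchanges the pieces of `A` in the second and fourth quadrants of the `(f, g)`-plane,
reflecting each through the origin. -/
def quadrantSwap (f g : E →L[ℝ] ℝ) (A : Set E) : Set E :=
  A ∩ {x | 0 ≤ f x * g x} ∪ -A ∩ {x | f x * g x ≤ 0}

variable {f g : E →L[ℝ] ℝ} {A : Set E}

theorem quadrantSwap_inter_of_subset_nonneg (hA : ∀ x ∈ A, f x * g x = 0 → -x ∈ A) {S : Set E}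
    (hS : S ⊆ {x | 0 ≤ f x * g x}) : quadrantSwap f g A ∩ S = A ∩ S := by
  ext x
  refine ⟨?_, fun ⟨hx, hxS⟩ => ⟨Or.inl ⟨hx, hS hxS⟩, hxS⟩⟩
  rintro ⟨⟨hx, -⟩ | ⟨hx, hle⟩, hxS⟩
  · exact ⟨hx, hxS⟩
  · have hzero : f x * g x = 0 := le_antisymm hle (hS hxS)
    exact ⟨by simpa using hA (-x) hx (by simpa using hzero), hxS⟩

theorem quadrantSwap_inter_of_subset_nonpos (hA : ∀ x ∈ A, f x * g x = 0 → -x ∈ A) {S : Set E}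
    (hS : S ⊆ {x | f x * g x ≤ 0}) : quadrantSwap f g A ∩ S = -A ∩ S := by
  ext x
  refine ⟨?_, fun ⟨hx, hxS⟩ => ⟨Or.inr ⟨hx, hS hxS⟩, hxS⟩⟩
  rintro ⟨⟨hx, hle⟩ | ⟨hx, -⟩, hxS⟩
  · exact ⟨hA x hx (le_antisymm (hS hxS) hle), hxS⟩
  · exact ⟨hx, hxS⟩

theorem quadrantSwap_inter_of_neg_eq {H : Set E} (hH : -H = H) :
    quadrantSwap f g A ∩ H = quadrantSwap f g (A ∩ H) := by
  ext x
  have hx : -x ∈ H ↔ x ∈ H := by rw [← mem_neg, hH]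
  simp only [quadrantSwap, mem_inter_iff, mem_union, mem_neg, hx]
  tauto

theorem IsCompact.quadrantSwap (hA : IsCompact A) : IsCompact (quadrantSwap f g A) :=
  (hA.inter_right (isClosed_le continuous_const (by fun_prop))).union
    (hA.neg.inter_right (isClosed_le (by fun_prop) continuous_const))

theorem measure_quadrantSwap_add [MeasurableSpace E] [BorelSpace E] (μ : Measure E)
    [IsFiniteMeasureOnCompacts μ] [μ.IsNegInvariant] {C : Set E} (hA : IsCompact A)
    (hAc : Convex ℝ A) (hAsymm : ∀ x ∈ A, f x * g x = 0 → -x ∈ A) (hBc : Convex ℝ (quadrantSwap f g A))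
    (hC : IsCompact C) (hCc : Convex ℝ C) (hCneg : -C = C) :
    μ (quadrantSwap f g A + C) = μ (A + C) := by
  have hA4 := measure_add_add_measure_walls_eq_sum_quadrants μ hA.isClosed hAc hC hCc f g
  have hB4 := measure_add_add_measure_walls_eq_sum_quadrants μ hA.quadrantSwap.isClosed hBc hC
    hCc f g
  have hkeep : ∀ S : Set E, S ⊆ {x | 0 ≤ f x * g x} → quadrantSwap f g A ∩ S = A ∩ S :=
    fun S => quadrantSwap_inter_of_subset_nonneg hAsymm
  have hflip : ∀ S : Set E, S ⊆ {x | f x * g x ≤ 0} →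
      μ (quadrantSwap f g A ∩ S + C) = μ (A ∩ -S + C) := by
    intro S hS
    rw [quadrantSwap_inter_of_subset_nonpos hAsymm hS, ← measure_neg_add_of_neg_eq μ hCneg,
      inter_neg, neg_neg]
  rw [hkeep {x | g x = 0} fun x hx => by simp [hx.out],
    hkeep ({x | 0 ≤ g x} ∩ {x | f x = 0}) fun x hx => by simp [hx.2.out],
    hkeep ({x | g x ≤ 0} ∩ {x | f x = 0}) fun x hx => by simp [hx.2.out],
    hkeep ({x | 0 ≤ g x} ∩ {x | 0 ≤ f x}) fun x hx => show 0 ≤ f x * g x from mul_nonneg hx.2 hx.1,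
    hflip ({x | 0 ≤ g x} ∩ {x | f x ≤ 0}) fun x hx => show f x * g x ≤ 0 from
      mul_nonpos_of_nonpos_of_nonneg hx.2 hx.1,
    hflip ({x | g x ≤ 0} ∩ {x | 0 ≤ f x}) fun x hx => show f x * g x ≤ 0 from
      mul_nonpos_of_nonneg_of_nonpos hx.2 hx.1,
    hkeep ({x | g x ≤ 0} ∩ {x | f x ≤ 0}) fun x hx => show 0 ≤ f x * g x from
      mul_nonneg_of_nonpos_of_nonpos hx.2 hx.1]
    at hB4
  simp only [inter_neg, neg_ofPred, map_neg, neg_nonneg, neg_nonpos] at hB4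
  rw [add_right_comm _ (μ (A ∩ ({x | g x ≤ 0} ∩ {x | 0 ≤ f x}) + C)), ← hA4] at hB4
  have hcancel : ∀ {S : Set E} {a b : ENNReal}, S ⊆ A → a + μ (S + C) = b + μ (S + C) → a = b :=
    fun hS => (ENNReal.add_left_inj
      ((measure_mono (add_subset_add_right hS)).trans_lt (hA.add hC).measure_lt_top).ne).1
  exact hcancel inter_subset_left (hcancel inter_subset_left (hcancel inter_subset_left hB4))

end QuadrantSwap

theorem kball_pos (j : ℕ) : 0 < kball j :=
  ENNReal.toReal_pos (Metric.measure_closedBall_pos volume _ one_pos).ne'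
    (isCompact_closedBall _ _).measure_lt_top.ne

section Steiner

open Polynomial

variable {n : ℕ} (Vfun : ℕ → Set (EuclideanSpace ℝ (Fin n)) → ℝ)

noncomputable def steinerPolynomial (A : Set (EuclideanSpace ℝ (Fin n))) : ℝ[X] :=
  ∑ j ∈ Finset.range (n + 1), C (kball (n - j) * Vfun j A) * X ^ (n - j)

theorem eval_steinerPolynomial {Vfun} (hV : IsIntrinsicVolumes Vfun)
    {A : Set (EuclideanSpace ℝ (Fin n))} (hA : IsCompact A) (hAc : Convex ℝ A)
    (hAne : A.Nonempty) {ε : ℝ} (hε : 0 ≤ ε) :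
    (steinerPolynomial Vfun A).eval ε =
      (volume (A + ε • Metric.closedBall (0 : EuclideanSpace ℝ (Fin n)) 1)).toReal := by
  simp [steinerPolynomial, eval_finsetSum, hV A hA hAc hAne ε hε]

theorem coeff_steinerPolynomial (A : Set (EuclideanSpace ℝ (Fin n))) {i : ℕ} (hi : i ≤ n) :
    (steinerPolynomial Vfun A).coeff (n - i) = kball (n - i) * Vfun i A := by
  simp only [steinerPolynomial, finsetSum_coeff, coeff_C_mul, coeff_X_pow]
  rw [Finset.sum_eq_single i]
  · simp
  · intro j hj hji
    have : n - i ≠ n - j := by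
      rw [Finset.mem_range] at hj
      omega
    simp [this]
  · simp only [Finset.mem_range]
    omega

theorem IsIntrinsicVolumes.apply_eq_of_measure_add_closedBall_eq {Vfun}
    (hV : IsIntrinsicVolumes Vfun) {A A' : Set (EuclideanSpace ℝ (Fin n))}
    (hA : IsCompact A) (hAc : Convex ℝ A) (hAne : A.Nonempty)
    (hA' : IsCompact A') (hA'c : Convex ℝ A') (hA'ne : A'.Nonempty)
    (hvol : ∀ ε : ℝ, 0 ≤ ε →
      volume (A + ε • Metric.closedBall (0 : EuclideanSpace ℝ (Fin n)) 1) =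
        volume (A' + ε • Metric.closedBall (0 : EuclideanSpace ℝ (Fin n)) 1))
    {i : ℕ} (hi : i ≤ n) : Vfun i A = Vfun i A' := by
  have hpoly : steinerPolynomial Vfun A = steinerPolynomial Vfun A' := by
    refine eq_of_infinite_eval_eq _ _ ((Ici_infinite (0 : ℝ)).mono fun ε (hε : 0 ≤ ε) => ?_)
    rw [mem_ofPred_eq, eval_steinerPolynomial hV hA hAc hAne hε,
      eval_steinerPolynomial hV hA' hA'c hA'ne hε, hvol ε hε]
  have hcoeff := congrArg (coeff · (n - i)) hpoly
  simp only [coeff_steinerPolynomial _ _ hi] at hcoeff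
  exact mul_left_cancel₀ (kball_pos (n - i)).ne' hcoeff

end Steiner

theorem not_exists_isometryEquiv_image_eq {X : Type*} [PseudoMetricSpace X] {K L : Set X}
    {c : X} {r : ℝ} (hK : K ⊆ Metric.closedBall c r) (hL : ∀ c', ∃ y ∈ L, r < dist y c') :
    ¬∃ T : X ≃ᵢ X, T '' K = L := by
  rintro ⟨T, rfl⟩
  obtain ⟨_, ⟨x, hx, rfl⟩, hfar⟩ := hL (T c)
  rw [T.dist_eq] at hfar
  exact hfar.not_ge (hK hx)

theorem isCompact_setOf_forall_abs_le (ι : Type*) [Fintype ι] (r : ℝ) :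
    IsCompact {x : EuclideanSpace ℝ ι | ∀ i, |x i| ≤ r} := by
  have : {x : EuclideanSpace ℝ ι | ∀ i, |x i| ≤ r} =
      EuclideanSpace.equiv ι ℝ ⁻¹' univ.pi fun _ => Icc (-r) r := by
    ext x
    simp only [mem_preimage, mem_univ_pi, mem_Icc, abs_le]
    rfl
  rw [this]
  exact (EuclideanSpace.equiv ι ℝ).toHomeomorph.isCompact_preimage.2
    (isCompact_univ_pi fun _ => isCompact_Icc)

theorem abs_apply_lt_of_mem_ball_zero {ι : Type*} [Fintype ι] {x : EuclideanSpace ℝ ι} {r : ℝ}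
    (hx : x ∈ Metric.ball 0 r) (i : ι) : |x i| < r :=
  (PiLp.norm_apply_le x i).trans_lt (mem_ball_zero_iff.1 hx)

theorem dist_sq_eq_fin_two_add_sum {m : ℕ} (x y : EuclideanSpace ℝ (Fin (m + 2))) :
    dist x y ^ 2 = (x 0 - y 0) ^ 2 + (x 1 - y 1) ^ 2 +
      ∑ j : Fin m, (x j.succ.succ - y j.succ.succ) ^ 2 := by
  rw [EuclideanSpace.dist_eq, Real.sq_sqrt (by positivity), Fin.sum_univ_succ, Fin.sum_univ_succ]
  simp only [Real.dist_eq, sq_abs, Fin.succ_zero_eq_one, add_assoc]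

theorem abs_mul_add_mul_le {a b s t r : ℝ} (ha : 0 ≤ a) (hb : 0 ≤ b) (hab : a + b = 1)
    (hs : |s| ≤ r) (ht : |t| ≤ r) : |a * s + b * t| ≤ r :=
  abs_le.2 (convex_Icc (-r) r (abs_le.1 hs) (abs_le.1 ht) ha hb hab)

theorem sq_add_sq_sub_half_le {p q : ℝ} (hp : |p| ≤ 2) (h₁ : q ≤ 1) (h₂ : p - 2 * q ≤ 2)
    (h₃ : -p - 2 * q ≤ 2) : p ^ 2 + (q - 1 / 2) ^ 2 ≤ 17 / 4 := by
  obtain ⟨hp₁, hp₂⟩ := abs_le.1 hp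
  rcases le_total 0 q with hq | hq
  · nlinarith
  · nlinarith [mul_nonneg (by linarith : (0 : ℝ) ≤ 2 + 2 * q - p) (by linarith : 0 ≤ 2 + 2 * q + p)]

/-- The circumcenter of the vertices `(2, ±1)`, `(-2, 0)` is `(1/8, 0)`, with circumradius `17/8`;
the weights `17, 17, 30` express it as their barycenter. -/
theorem exists_sq_dist_gt (a b : ℝ) : ∃ p q : ℝ, (|p| ≤ 2 ∧ |q| ≤ 1 ∧ -p + 2 * q ≤ 2 ∧
    -p - 2 * q ≤ 2) ∧ 17 / 4 < (p - a) ^ 2 + (q - b) ^ 2 := by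
  by_contra! h
  have h₁ := h 2 1 (by norm_num)
  have h₂ := h 2 (-1) (by norm_num)
  have h₃ := h (-2) 0 (by norm_num)
  nlinarith [sq_nonneg (a - 1 / 8), sq_nonneg b]

section HouseBody

variable (m : ℕ)

/-- The pentagon with vertices `(±2, 1)`, `(±2, 0)`, `(0, -1)`, times the cube `[-2, 2]ᵐ`. -/
def houseBody : Set (EuclideanSpace ℝ (Fin (m + 2))) :=
  {x | (∀ i, |x i| ≤ 2) ∧ x 1 ≤ 1 ∧ x 0 - 2 * x 1 ≤ 2 ∧ -x 0 - 2 * x 1 ≤ 2}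

noncomputable def swappedHouseBody : Set (EuclideanSpace ℝ (Fin (m + 2))) :=
  quadrantSwap (EuclideanSpace.proj 0) (EuclideanSpace.proj 1) (houseBody m)

variable {m}

theorem neg_mem_houseBody {x : EuclideanSpace ℝ (Fin (m + 2))} :
    -x ∈ houseBody m ↔ (∀ i, |x i| ≤ 2) ∧ -x 1 ≤ 1 ∧ -x 0 + 2 * x 1 ≤ 2 ∧ x 0 + 2 * x 1 ≤ 2 := by
  simp only [houseBody, mem_ofPred_eq, PiLp.neg_apply, abs_neg]
  constructor <;> rintro ⟨hc, h₁, h₂, h₃⟩ <;> exact ⟨hc, h₁, by linarith, by linarith⟩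

/-- The swapped body is the pentagon with vertices `(2, ±1)`, `(0, ±1)`, `(-2, 0)`, times the
same cube. -/
theorem mem_swappedHouseBody {x : EuclideanSpace ℝ (Fin (m + 2))} :
    x ∈ swappedHouseBody m ↔
      (∀ i, |x i| ≤ 2) ∧ |x 1| ≤ 1 ∧ -x 0 + 2 * x 1 ≤ 2 ∧ -x 0 - 2 * x 1 ≤ 2 := by
  simp only [swappedHouseBody, quadrantSwap, mem_union, mem_inter_iff, mem_neg,
    neg_mem_houseBody, EuclideanSpace.coe_proj, mem_ofPred_eq]
  constructor
  · rintro (⟨⟨hc, h₁, h₂, h₃⟩, hs⟩ | ⟨⟨hc, h₁, h₂, h₃⟩, hs⟩) <;>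
      have hc₀ := abs_le.1 (hc 0)
    · rcases mul_nonneg_iff.1 hs with ⟨hx₀, hx₁⟩ | ⟨hx₀, hx₁⟩ <;>
        exact ⟨hc, abs_le.2 ⟨by linarith, h₁⟩, by linarith, h₃⟩
    · rcases mul_nonpos_iff.1 hs with ⟨hx₀, hx₁⟩ | ⟨hx₀, hx₁⟩ <;>
        exact ⟨hc, abs_le.2 ⟨by linarith, by linarith⟩, h₂, by linarith⟩
  · rintro ⟨hc, h₁, h₂, h₃⟩
    obtain ⟨h₀, h₀'⟩ := abs_le.1 (hc 0)
    obtain ⟨h₁, h₁'⟩ := abs_le.1 h₁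
    rcases le_total 0 (x 0) with hx₀ | hx₀ <;> rcases le_total 0 (x 1) with hx₁ | hx₁
    · exact Or.inl ⟨⟨hc, h₁', by linarith, h₃⟩, mul_nonneg hx₀ hx₁⟩
    · exact Or.inr ⟨⟨hc, by linarith, h₂, by linarith⟩, mul_nonpos_of_nonneg_of_nonpos hx₀ hx₁⟩
    · exact Or.inr ⟨⟨hc, by linarith, h₂, by linarith⟩, mul_nonpos_of_nonpos_of_nonneg hx₀ hx₁⟩
    · exact Or.inl ⟨⟨hc, h₁', by linarith, h₃⟩, mul_nonneg_of_nonpos_of_nonpos hx₀ hx₁⟩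

theorem convex_houseBody : Convex ℝ (houseBody m) := by
  rintro x ⟨hx, hx₁, hx₂, hx₃⟩ y ⟨hy, hy₁, hy₂, hy₃⟩ a b ha hb hab
  simp only [houseBody, mem_ofPred_eq, PiLp.add_apply, PiLp.smul_apply, smul_eq_mul]
  exact ⟨fun i => abs_mul_add_mul_le ha hb hab (hx i) (hy i), by nlinarith, by nlinarith,
    by nlinarith⟩

theorem convex_swappedHouseBody : Convex ℝ (swappedHouseBody m) := by
  intro x hx y hy a b ha hb hab
  rw [mem_swappedHouseBody] at hx hy ⊢
  obtain ⟨hx, hx₁, hx₂, hx₃⟩ := hx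
  obtain ⟨hy, hy₁, hy₂, hy₃⟩ := hy
  simp only [PiLp.add_apply, PiLp.smul_apply, smul_eq_mul]
  exact ⟨fun i => abs_mul_add_mul_le ha hb hab (hx i) (hy i),
    abs_mul_add_mul_le ha hb hab hx₁ hy₁, by nlinarith, by nlinarith⟩

theorem isCompact_houseBody : IsCompact (houseBody m) := by
  simp only [houseBody, ofPred_and]
  exact (isCompact_setOf_forall_abs_le _ 2).inter_right
    ((isClosed_le (by fun_prop) continuous_const).inter
      ((isClosed_le (by fun_prop) continuous_const).inter
        (isClosed_le (by fun_prop) continuous_const)))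

theorem zero_mem_interior_houseBody : 0 ∈ interior (houseBody m) := by
  refine mem_interior_iff_mem_nhds.2 (Metric.mem_nhds_iff.2 ⟨1 / 2, by norm_num, fun x hx => ?_⟩)
  have hx₀ := abs_lt.1 (abs_apply_lt_of_mem_ball_zero hx 0)
  have hx₁ := abs_lt.1 (abs_apply_lt_of_mem_ball_zero hx 1)
  exact ⟨fun i => (abs_apply_lt_of_mem_ball_zero hx i).le.trans (by norm_num), by linarith,
    by linarith, by linarith⟩

theorem zero_mem_interior_swappedHouseBody : 0 ∈ interior (swappedHouseBody m) := by
  refine mem_interior_iff_mem_nhds.2 (Metric.mem_nhds_iff.2 ⟨1 / 2, by norm_num, fun x hx => ?_⟩)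
  have hx₀ := abs_lt.1 (abs_apply_lt_of_mem_ball_zero hx 0)
  have hx₁ := abs_lt.1 (abs_apply_lt_of_mem_ball_zero hx 1)
  exact mem_swappedHouseBody.2 ⟨fun i => (abs_apply_lt_of_mem_ball_zero hx i).le.trans
    (by norm_num), abs_le.2 ⟨by linarith, by linarith⟩, by linarith, by linarith⟩

theorem neg_mem_houseBody_of_mul_eq_zero {x : EuclideanSpace ℝ (Fin (m + 2))}
    (hx : x ∈ houseBody m) (h : x 0 * x 1 = 0) : -x ∈ houseBody m := by
  obtain ⟨hc, h₁, h₂, h₃⟩ := hx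
  have hc₀ := abs_le.1 (hc 0)
  rw [neg_mem_houseBody]
  rcases mul_eq_zero.1 h with h | h <;> exact ⟨hc, by linarith, by linarith, by linarith⟩

theorem measure_swappedHouseBody_inter_add (μ : Measure (EuclideanSpace ℝ (Fin (m + 2))))
    [IsFiniteMeasureOnCompacts μ] [μ.IsNegInvariant]
    (H : Submodule ℝ (EuclideanSpace ℝ (Fin (m + 2))))
    {C : Set (EuclideanSpace ℝ (Fin (m + 2)))} (hC : IsCompact C) (hCc : Convex ℝ C)
    (hCneg : -C = C) : μ (swappedHouseBody m ∩ H + C) = μ (houseBody m ∩ H + C) := by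
  have hswap := quadrantSwap_inter_of_neg_eq (f := EuclideanSpace.proj 0)
    (g := EuclideanSpace.proj 1) (A := houseBody m) H.neg_coe
  rw [swappedHouseBody, hswap]
  refine measure_quadrantSwap_add μ (isCompact_houseBody.inter_right H.closed_of_finiteDimensional)
    (convex_houseBody.inter H.convex) ?_ ?_ hC hCc hCneg
  · rintro x ⟨hx, hxH⟩ h
    exact ⟨neg_mem_houseBody_of_mul_eq_zero hx h, H.neg_mem hxH⟩
  · rw [← hswap]
    exact convex_swappedHouseBody.inter H.convex

theorem houseBody_subset_closedBall :
    houseBody m ⊆ Metric.closedBall (WithLp.toLp 2 (Fin.cons 0 (Fin.cons (1 / 2) 0)))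
      √(17 / 4 + 4 * m) := by
  rintro x ⟨hc, h₁, h₂, h₃⟩
  rw [Metric.mem_closedBall, Real.le_sqrt dist_nonneg (by positivity), dist_sq_eq_fin_two_add_sum]
  have h2d := sq_add_sq_sub_half_le (hc 0) h₁ h₂ h₃
  have hrest : ∑ j : Fin m, (x j.succ.succ - 0) ^ 2 ≤ ∑ _j : Fin m, 4 := by
    refine Finset.sum_le_sum fun j _ => ?_
    rw [sub_zero, ← sq_abs]
    nlinarith [hc j.succ.succ, abs_nonneg (x j.succ.succ)]
  simp only [Finset.sum_const, Finset.card_univ, Fintype.card_fin, nsmul_eq_mul] at hrest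
  simp only [Fin.cons_zero, Fin.cons_one, Fin.cons_succ, Pi.zero_apply]
  linarith

theorem exists_dist_swappedHouseBody_gt (c : EuclideanSpace ℝ (Fin (m + 2))) :
    ∃ y ∈ swappedHouseBody m, √(17 / 4 + 4 * m) < dist y c := by
  obtain ⟨p, q, ⟨hp, hq, h₂, h₃⟩, hfar⟩ := exists_sq_dist_gt (c 0) (c 1)
  set y : EuclideanSpace ℝ (Fin (m + 2)) :=
    WithLp.toLp 2 (Fin.cons p (Fin.cons q fun j => if 0 ≤ c j.succ.succ then -2 else 2))
  have hrest : ∑ _j : Fin m, (4 : ℝ) ≤ ∑ j : Fin m, (y j.succ.succ - c j.succ.succ) ^ 2 := by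
    refine Finset.sum_le_sum fun j _ => ?_
    simp only [y, Fin.cons_succ]
    split_ifs <;> nlinarith
  simp only [Finset.sum_const, Finset.card_univ, Fintype.card_fin, nsmul_eq_mul] at hrest
  refine ⟨y, mem_swappedHouseBody.2 ⟨?_, hq, h₂, h₃⟩, ?_⟩
  · simp only [Fin.forall_fin_succ, y, Fin.cons_zero, Fin.cons_succ]
    exact ⟨hp, hq.trans one_le_two, fun j => by split_ifs <;> norm_num⟩
  · rw [← Real.sqrt_sq dist_nonneg, dist_sq_eq_fin_two_add_sum]
    refine Real.sqrt_lt_sqrt (by positivity) ?_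
    simp only [y, Fin.cons_zero, Fin.cons_one]
    linarith

end HouseBody

theorem exists_noncongruent_equal_intrinsic_volumes_of_sections {n : ℕ} (hn : 2 ≤ n) :
    ∃ K L : Set (EuclideanSpace ℝ (Fin n)),
      IsCompact K ∧ Convex ℝ K ∧ (0 : EuclideanSpace ℝ (Fin n)) ∈ interior K ∧
      IsCompact L ∧ Convex ℝ L ∧ (0 : EuclideanSpace ℝ (Fin n)) ∈ interior L ∧
      (¬ ∃ T : EuclideanSpace ℝ (Fin n) ≃ᵢ EuclideanSpace ℝ (Fin n), T '' K = L) ∧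
      ∀ Vfun : ℕ → Set (EuclideanSpace ℝ (Fin n)) → ℝ, IsIntrinsicVolumes Vfun →
        ∀ i k : ℕ, 1 ≤ i → i ≤ k → k ≤ n - 1 →
          ∀ H : Submodule ℝ (EuclideanSpace ℝ (Fin n)), Module.finrank ℝ H = k →
            Vfun i (K ∩ (H : Set (EuclideanSpace ℝ (Fin n)))) =
              Vfun i (L ∩ (H : Set (EuclideanSpace ℝ (Fin n)))) := by
  obtain ⟨m, rfl⟩ : ∃ m, n = m + 2 := ⟨n - 2, by omega⟩
  refine ⟨houseBody m, swappedHouseBody m, isCompact_houseBody, convex_houseBody,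
    zero_mem_interior_houseBody, isCompact_houseBody.quadrantSwap, convex_swappedHouseBody,
    zero_mem_interior_swappedHouseBody,
    not_exists_isometryEquiv_image_eq houseBody_subset_closedBall exists_dist_swappedHouseBody_gt,
    fun Vfun hV i k _ hik hk H _ => ?_⟩
  have hH : IsClosed (H : Set (EuclideanSpace ℝ (Fin (m + 2)))) := H.closed_of_finiteDimensional
  refine hV.apply_eq_of_measure_add_closedBall_eq (isCompact_houseBody.inter_right hH)
    (convex_houseBody.inter H.convex) ⟨0, interior_subset zero_mem_interior_houseBody, H.zero_mem⟩
    (isCompact_houseBody.quadrantSwap.inter_right hH) (convex_swappedHouseBody.inter H.convex)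
    ⟨0, interior_subset zero_mem_interior_swappedHouseBody, H.zero_mem⟩ (fun ε _ => ?_) (by omega)
  refine (measure_swappedHouseBody_inter_add volume H ((isCompact_closedBall 0 1).smul ε)
    ((convex_closedBall 0 1).smul ε) ?_).symm
  rw [← smul_set_neg, neg_closedBall, neg_zero]
end

section
/- Let K and L be convex bodies in ℝⁿ containing the origin in their interiors, and suppose that for some unit vector ξ one has ρ_K(ξ) = ρ_L(ξ) and K \ L = −(L \ K). Then ρ_K(−ξ) = ρ_L(−ξ). -/
open Set

section aux

variable {n : ℕ} {K : Set (EuclideanSpace ℝ (Fin n))} {v : EuclideanSpace ℝ (Fin n)}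

lemma radial_set_nonempty (hK0 : (0 : EuclideanSpace ℝ (Fin n)) ∈ interior K)
    (hv : ‖v‖ = 1) : {r : ℝ | 0 < r ∧ r • v ∈ K}.Nonempty := by
  obtain ⟨ε, hε, hball⟩ := Metric.isOpen_iff.mp isOpen_interior 0 hK0
  refine ⟨ε / 2, by positivity, interior_subset (hball ?_)⟩
  simp only [Metric.mem_ball, dist_zero_right, norm_smul, hv, mul_one,
    abs_of_pos (by positivity : (0:ℝ) < ε / 2), Real.norm_eq_abs]
  linarith

lemma radial_set_bddAbove (hKc : IsCompact K) (hv : ‖v‖ = 1) :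
    BddAbove {r : ℝ | 0 < r ∧ r • v ∈ K} := by
  obtain ⟨R, hR⟩ := hKc.isBounded.exists_norm_le
  refine ⟨R, fun r hr => ?_⟩
  have := hR _ hr.2
  rwa [norm_smul, hv, mul_one, Real.norm_eq_abs, abs_of_pos hr.1] at this

lemma radial_pos (hKc : IsCompact K)
    (hK0 : (0 : EuclideanSpace ℝ (Fin n)) ∈ interior K) (hv : ‖v‖ = 1) :
    0 < radial K v := by
  obtain ⟨r, hr⟩ := radial_set_nonempty hK0 hv
  exact lt_of_lt_of_le hr.1 (le_csSup (radial_set_bddAbove hKc hv) hr)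

lemma le_radial (hKc : IsCompact K) (hv : ‖v‖ = 1) {r : ℝ} (h0 : 0 < r)
    (hmem : r • v ∈ K) : r ≤ radial K v :=
  le_csSup (radial_set_bddAbove hKc hv) ⟨h0, hmem⟩

lemma radial_smul_mem (hKc : IsCompact K)
    (hK0 : (0 : EuclideanSpace ℝ (Fin n)) ∈ interior K) (hv : ‖v‖ = 1) :
    (radial K v) • v ∈ K := by
  have hs : sSup {r : ℝ | 0 < r ∧ r • v ∈ K} ∈ closure {r : ℝ | 0 < r ∧ r • v ∈ K} :=
    csSup_mem_closure (radial_set_nonempty hK0 hv) (radial_set_bddAbove hKc hv)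
  have hsub : closure {r : ℝ | 0 < r ∧ r • v ∈ K} ⊆ {r : ℝ | r • v ∈ K} := by
    apply closure_minimal (fun r hr => hr.2)
    exact IsClosed.preimage (by fun_prop) hKc.isClosed
  exact hsub hs

lemma smul_mem_of_le (hKv : Convex ℝ K)
    (hK0 : (0 : EuclideanSpace ℝ (Fin n)) ∈ interior K) {a r : ℝ}
    (hmem : a • v ∈ K) (h0 : 0 < r) (hra : r ≤ a) : r • v ∈ K := by
  have ha : 0 < a := lt_of_lt_of_le h0 hra
  have h0K : (0 : EuclideanSpace ℝ (Fin n)) ∈ K := interior_subset hK0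
  have := hKv.smul_mem_of_zero_mem h0K hmem
    (⟨by positivity, by rw [div_le_one ha]; exact hra⟩ : r / a ∈ Icc (0:ℝ) 1)
  rwa [smul_smul, div_mul_cancel₀ _ ha.ne'] at this

lemma radial_neg_le (K L : Set (EuclideanSpace ℝ (Fin n)))
    (hKc : IsCompact K) (hKv : Convex ℝ K)
    (hK0 : (0 : EuclideanSpace ℝ (Fin n)) ∈ interior K)
    (hLc : IsCompact L) (hLv : Convex ℝ L)
    (hL0 : (0 : EuclideanSpace ℝ (Fin n)) ∈ interior L)
    (ξ : EuclideanSpace ℝ (Fin n)) (hξ : ‖ξ‖ = 1)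
    (hr : radial K ξ = radial L ξ) (h : K \ L = -(L \ K)) :
    radial K (-ξ) ≤ radial L (-ξ) := by
  by_contra hab
  push_neg at hab
  have hnξ : ‖(-ξ)‖ = 1 := by rwa [norm_neg]
  set a := radial K (-ξ) with ha
  have ha0 : 0 < a := radial_pos hKc hK0 hnξ
  have haK : a • (-ξ) ∈ K := radial_smul_mem hKc hK0 hnξ
  have haL : a • (-ξ) ∉ L := fun hmem =>
    absurd (le_radial hLc hnξ ha0 hmem) (not_le.mpr hab)
  have hd : a • (-ξ) ∈ K \ L := ⟨haK, haL⟩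
  rw [h, Set.mem_neg] at hd
  rw [smul_neg, neg_neg] at hd
  have h1 : a ≤ radial L ξ := le_radial hLc hξ ha0 hd.1
  have h2 : radial K ξ < a := by
    by_contra hc
    push_neg at hc
    exact hd.2 (smul_mem_of_le hKv hK0 (radial_smul_mem hKc hK0 hξ) ha0 hc)
  rw [hr] at h2
  exact absurd (lt_of_lt_of_le h2 h1) (lt_irrefl _)

end aux

theorem radial_neg_eq_of_radial_eq_of_diff_symm {n : ℕ}
    (K L : Set (EuclideanSpace ℝ (Fin n)))
    (hKc : IsCompact K) (hKv : Convex ℝ K)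
    (hK0 : (0 : EuclideanSpace ℝ (Fin n)) ∈ interior K)
    (hLc : IsCompact L) (hLv : Convex ℝ L)
    (hL0 : (0 : EuclideanSpace ℝ (Fin n)) ∈ interior L)
    (ξ : EuclideanSpace ℝ (Fin n)) (hξ : ‖ξ‖ = 1)
    (hr : radial K ξ = radial L ξ) (h : K \ L = -(L \ K)) :
    radial K (-ξ) = radial L (-ξ) := by
  have h' : L \ K = -(K \ L) := by rw [h, neg_neg]
  exact le_antisymm
    (radial_neg_le K L hKc hKv hK0 hLc hLv hL0 ξ hξ hr h)
    (radial_neg_le L K hLc hLv hL0 hKc hKv hK0 ξ hξ hr.symm h')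
end
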